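/- arXiv:math/0601476 — 3 statements merged into one kernel-verified Lean document; each statement's English description precedes it below -/
import Mathlib

section
/- For every natural number k ≥ 5, the inclusion of E_k into F_k induces an isomorphism of fundamental groups π₁(E_k, p) ≅ π₁(F_k, p) for any basepoint p ∈ E_k. (Consequently π₁(E_k) is isomorphic to the pure braid group P_k for k ≥ 5.) -/
open Matrix CategoryTheory
open scoped FundamentalGroupoid

/-- The real plane, as `Fin 2 → ℝ`. -/
abbrev Plane : Type := Fin 2 → ℝ

/-- `F k`: the ordered configuration space of `k` distinct points in the plane. -/
abbrev Conf (k : ℕ) : Type := {p : Fin k → Plane // Function.Injective p}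

/-- `E k`: configurations of `k` distinct points affinely spanning the plane. -/
abbrev SpanConf (k : ℕ) : Type :=
  {p : Fin k → Plane // Function.Injective p ∧ affineSpan ℝ (Set.range p) = ⊤}

/-- The functor of fundamental groupoids induced by a continuous map. -/
noncomputable def piFunctor {X Y : Type} [TopologicalSpace X] [TopologicalSpace Y]
    (f : C(X, Y)) : FundamentalGroupoid X ⥤ FundamentalGroupoid Y :=
  show πₓ (TopCat.of X) ⟶ πₓ (TopCat.of Y) from πₘ (TopCat.ofHom f)

/-- The homomorphism of fundamental groups induced by a continuous map. -/
noncomputable def inducedPiOne {X Y : Type} [TopologicalSpace X] [TopologicalSpace Y]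
    (f : C(X, Y)) (x : X) :
    FundamentalGroup X x →* FundamentalGroup Y (f x) :=
  Functor.mapEnd (FundamentalGroupoid.mk x) (piFunctor f)

/-- The inclusion `E k ↪ F k` as a continuous map. -/
def inclusionEF (k : ℕ) : C(SpanConf k, Conf k) :=
  ⟨fun p => ⟨p.1, p.2.1⟩, by fun_prop⟩

open Metric Set Module
open scoped unitInterval ENNReal NNReal

namespace Pi1Aux

/-- ambient configuration space -/
abbrev Amb (k : ℕ) : Type := Fin k → Plane

/-- 2d cross product -/
def cross (u v : Plane) : ℝ := u 0 * v 1 - u 1 * v 0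

variable {k : ℕ}

/-- collinear locus -/
def Zset (k : ℕ) [NeZero k] : Set (Amb k) :=
  {q | ∀ i j : Fin k, cross (q i - q 0) (q j - q 0) = 0}

def Fset (k : ℕ) : Set (Amb k) := {q | Function.Injective q}

def Eset (k : ℕ) [NeZero k] : Set (Amb k) := {q | Function.Injective q ∧ q ∉ Zset k}

lemma continuous_eval (i : Fin k) (j : Fin 2) : Continuous fun q : Amb k => q i j :=
  (continuous_apply j).comp (continuous_apply i)

lemma isClosed_Zset [NeZero k] : IsClosed (Zset k) := by
  have : Zset k = ⋂ (i : Fin k) (j : Fin k),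
      {q : Amb k | cross (q i - q 0) (q j - q 0) = 0} := by
    ext q; simp [Zset, Set.mem_iInter]
  rw [this]
  refine isClosed_iInter fun i => isClosed_iInter fun j => isClosed_eq ?_ continuous_const
  unfold cross
  simp only [Pi.sub_apply]
  fun_prop

lemma isOpen_Fset : IsOpen (Fset k) := by
  have : (Fset k)ᶜ = ⋃ (i : Fin k) (j : Fin k) (_ : i ≠ j), {q : Amb k | q i = q j} := by
    ext q
    simp only [Fset, Set.mem_compl_iff, Set.mem_setOf_eq, Set.mem_iUnion, Function.Injective]
    constructor
    · intro h
      push_neg at h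
      obtain ⟨i, j, hij, hne⟩ := h
      exact ⟨i, j, hne, hij⟩
    · rintro ⟨i, j, hne, hij⟩ h
      exact hne (h hij)
  rw [← isClosed_compl_iff, this]
  exact isClosed_iUnion_of_finite fun i => isClosed_iUnion_of_finite fun j =>
    isClosed_iUnion_of_finite fun _ => isClosed_eq (continuous_apply i) (continuous_apply j)

lemma cross_zero_imp {u v : Plane} (hv : v ≠ 0) (h : cross u v = 0) : ∃ r : ℝ, u = r • v := by
  have hv' : v 0 ≠ 0 ∨ v 1 ≠ 0 := by
    by_contra hc
    push_neg at hc
    exact hv (by funext j; fin_cases j <;> simp [hc.1, hc.2])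
  unfold cross at h
  rcases hv' with h0 | h1
  · refine ⟨u 0 / v 0, ?_⟩
    funext j; fin_cases j
    · simp; field_simp
    · show u 1 = u 0 / v 0 * v 1
      field_simp
      linarith [h]
  · refine ⟨u 1 / v 1, ?_⟩
    funext j; fin_cases j
    · show u 0 = u 1 / v 1 * v 0
      field_simp
      linarith [h]
    · simp; field_simp

lemma span_top_of_not_mem_Z [NeZero k] {q : Amb k} (h : q ∉ Zset k) :
    affineSpan ℝ (Set.range q) = ⊤ := by
  rw [AffineSubspace.affineSpan_eq_top_iff_vectorSpan_eq_top_of_nonempty ℝ Plane Plane (Set.range_nonempty q)]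
  simp only [Zset, Set.mem_setOf_eq] at h
  push_neg at h
  obtain ⟨i, j, hij⟩ := h
  set u := q i - q 0 with hu
  set w := q j - q 0 with hw
  have hu_mem : u ∈ vectorSpan ℝ (Set.range q) :=
    vsub_mem_vectorSpan ℝ (Set.mem_range_self i) (Set.mem_range_self 0)
  have hw_mem : w ∈ vectorSpan ℝ (Set.range q) :=
    vsub_mem_vectorSpan ℝ (Set.mem_range_self j) (Set.mem_range_self 0)
  rw [eq_top_iff]
  intro x _
  have hx : x = (cross x w / cross u w) • u + (cross u x / cross u w) • w := by
    funext l
    have hc := hij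
    fin_cases l <;>
    · show x _ = cross x w / cross u w * u _ + cross u x / cross u w * w _
      field_simp
      unfold cross
      simp only [Fin.zero_eta, Fin.mk_one, Fin.isValue]
      ring
  rw [hx]
  exact Submodule.add_mem _ (Submodule.smul_mem _ _ hu_mem) (Submodule.smul_mem _ _ hw_mem)

lemma not_span_of_mem_Z [NeZero k] {q : Amb k} (h : q ∈ Zset k) :
    affineSpan ℝ (Set.range q) ≠ ⊤ := by
  -- find w with all differences multiples of w
  have key : ∃ w : Plane, ∀ i : Fin k, ∃ r : ℝ, q i - q 0 = r • w := by
    by_cases hall : ∀ i : Fin k, q i - q 0 = 0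
    · exact ⟨fun _ => 1, fun i => ⟨0, by simp [hall i]⟩⟩
    · push_neg at hall
      obtain ⟨i₀, hi₀⟩ := hall
      exact ⟨q i₀ - q 0, fun i => cross_zero_imp hi₀ (h i i₀)⟩
  obtain ⟨w, hw⟩ := key
  intro htop
  rw [AffineSubspace.affineSpan_eq_top_iff_vectorSpan_eq_top_of_nonempty ℝ Plane Plane (Set.range_nonempty q)]
    at htop
  have hle : vectorSpan ℝ (Set.range q) ≤ Submodule.span ℝ {w} := by
    rw [vectorSpan_eq_span_vsub_set_right ℝ (Set.mem_range_self (0 : Fin k))]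
    rw [Submodule.span_le]
    rintro x ⟨y, ⟨i, rfl⟩, rfl⟩
    obtain ⟨r, hr⟩ := hw i
    exact Submodule.mem_span_singleton.mpr ⟨r, by simp [← hr]⟩
  rw [htop] at hle
  have he0 : (fun j : Fin 2 => if j = 0 then (1:ℝ) else 0) ∈ Submodule.span ℝ {w} :=
    hle Submodule.mem_top
  have he1 : (fun j : Fin 2 => if j = 1 then (1:ℝ) else 0) ∈ Submodule.span ℝ {w} :=
    hle Submodule.mem_top
  obtain ⟨a, ha⟩ := Submodule.mem_span_singleton.mp he0
  obtain ⟨b, hb⟩ := Submodule.mem_span_singleton.mp he1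
  have ha0 := congrFun ha 0
  have ha1 := congrFun ha 1
  have hb0 := congrFun hb 0
  have hb1 := congrFun hb 1
  simp only [Pi.smul_apply, smul_eq_mul, Fin.isValue] at ha0 ha1 hb0 hb1
  norm_num at ha0 ha1 hb0 hb1
  rcases ha1 with h' | h' <;> rcases hb0 with h'' | h'' <;>
    simp only [h', h'', zero_mul, mul_zero] at ha0 hb1 <;> nlinarith [ha0, hb1]

lemma mem_Eset_iff [NeZero k] (q : Amb k) :
    q ∈ Eset k ↔ (Function.Injective q ∧ affineSpan ℝ (Set.range q) = ⊤) := by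
  constructor
  · rintro ⟨h1, h2⟩; exact ⟨h1, span_top_of_not_mem_Z h2⟩
  · rintro ⟨h1, h2⟩; exact ⟨h1, fun hz => not_span_of_mem_Z hz h2⟩

def chartNV (k : ℕ) (w : (ℝ × ℝ) × (Fin k → ℝ)) : Amb k :=
  fun i j => if j = 0 then w.2 i else w.1.1 * w.2 i + w.1.2

/-- vertical lines chart -/
def chartV (k : ℕ) (w : ℝ × (Fin k → ℝ)) : Amb k :=
  fun i j => if j = 0 then w.1 else w.2 i

lemma contDiff_chartNV : ContDiff ℝ 1 (chartNV k) := by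
  unfold chartNV
  rw [contDiff_pi]
  intro i
  rw [contDiff_pi]
  intro j
  by_cases hj : j = 0 <;> simp only [hj, if_true, if_false, reduceIte] <;> fun_prop

lemma contDiff_chartV : ContDiff ℝ 1 (chartV k) := by
  unfold chartV
  rw [contDiff_pi]
  intro i
  rw [contDiff_pi]
  intro j
  by_cases hj : j = 0 <;> simp only [hj, if_true, if_false, reduceIte] <;> fun_prop

lemma Zset_subset_charts [NeZero k] :
    Zset k ⊆ Set.range (chartNV k) ∪ Set.range (chartV k) := by
  intro q hq
  by_cases hall : ∀ i, q i 0 = q 0 0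
  · right
    refine ⟨(q 0 0, fun i => q i 1), ?_⟩
    funext i j
    fin_cases j
    · exact (hall i).symm
    · rfl
  · left
    push_neg at hall
    obtain ⟨i₀, hi₀⟩ := hall
    have hd : q i₀ 0 - q 0 0 ≠ 0 := sub_ne_zero.mpr hi₀
    set m : ℝ := (q i₀ 1 - q 0 1) / (q i₀ 0 - q 0 0) with hm
    set c : ℝ := q 0 1 - m * q 0 0 with hc
    refine ⟨((m, c), fun i => q i 0), ?_⟩
    funext i j
    have hcr := hq i i₀
    unfold cross at hcr
    simp only [Pi.sub_apply] at hcr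
    fin_cases j
    · rfl
    · show m * q i 0 + c = q i 1
      rw [hc, hm]
      field_simp
      linarith [hcr]

/-- every continuous real function on `I × I` is uniformly approximated by
restrictions of `C¹` functions on `ℝ × ℝ`. -/
lemma scalar_approx (h : C(I × I, ℝ)) {ε : ℝ} (hε : 0 < ε) :
    ∃ g : ℝ × ℝ → ℝ, ContDiff ℝ 1 g ∧
      ∀ z : I × I, |g ((z.1 : ℝ), (z.2 : ℝ)) - h z| ≤ ε := by
  set c₁ : C(I × I, ℝ) := ⟨fun z => (z.1 : ℝ), by fun_prop⟩ with hc₁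
  set c₂ : C(I × I, ℝ) := ⟨fun z => (z.2 : ℝ), by fun_prop⟩ with hc₂
  set A : Subalgebra ℝ C(I × I, ℝ) := Algebra.adjoin ℝ {c₁, c₂} with hA
  have hsep : A.SeparatesPoints := by
    intro x y hxy
    have : x.1 ≠ y.1 ∨ x.2 ≠ y.2 := by
      by_contra hc
      push_neg at hc
      exact hxy (Prod.ext hc.1 hc.2)
    rcases this with hne | hne
    · exact ⟨c₁, ⟨c₁, Algebra.subset_adjoin (by simp), rfl⟩,
        by simpa [hc₁, Subtype.ext_iff] using hne⟩
    · exact ⟨c₂, ⟨c₂, Algebra.subset_adjoin (by simp), rfl⟩,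
        by simpa [hc₂, Subtype.ext_iff] using hne⟩
  obtain ⟨g₀, hg₀⟩ :=
    ContinuousMap.exists_mem_subalgebra_near_continuousMap_of_separatesPoints A hsep h ε hε
  -- extract a smooth global representative
  have hsm : ∀ (f : C(I × I, ℝ)), f ∈ A → ∃ g : ℝ × ℝ → ℝ, ContDiff ℝ 1 g ∧
      ∀ z : I × I, g ((z.1 : ℝ), (z.2 : ℝ)) = f z := by
    intro f hf
    induction hf using Algebra.adjoin_induction with
    | mem x hx =>
      rcases hx with rfl | rfl
      · exact ⟨fun p => p.1, contDiff_fst, fun z => rfl⟩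
      · exact ⟨fun p => p.2, contDiff_snd, fun z => rfl⟩
    | algebraMap r => exact ⟨fun _ => r, contDiff_const, fun z => rfl⟩
    | add x y hx hy ihx ihy =>
      obtain ⟨gx, hgx, hgx'⟩ := ihx
      obtain ⟨gy, hgy, hgy'⟩ := ihy
      exact ⟨gx + gy, hgx.add hgy, fun z => by
        simp [Pi.add_apply, hgx' z, hgy' z]⟩
    | mul x y hx hy ihx ihy =>
      obtain ⟨gx, hgx, hgx'⟩ := ihx
      obtain ⟨gy, hgy, hgy'⟩ := ihy
      exact ⟨gx * gy, hgx.mul hgy, fun z => by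
        simp [Pi.mul_apply, hgx' z, hgy' z]⟩
  obtain ⟨g, hg, hg'⟩ := hsm g₀ g₀.2
  refine ⟨g, hg, fun z => ?_⟩
  have h1 : ((g₀ : C(I × I, ℝ)) - h) z = (g₀ : C(I × I, ℝ)) z - h z := rfl
  have h2 : |((g₀ : C(I × I, ℝ)) - h) z| ≤ ‖(g₀ : C(I × I, ℝ)) - h‖ := by
    have := ((g₀ : C(I × I, ℝ)) - h).norm_coe_le_norm z
    simpa [Real.norm_eq_abs] using this
  rw [hg' z]
  rw [h1] at h2
  linarith [hg₀.le, h2]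

/-- smoothing of maps into the configuration space ambient -/
lemma smooth_approx (H : C(I × I, Amb k)) {ε : ℝ} (hε : 0 < ε) :
    ∃ G : ℝ × ℝ → Amb k, ContDiff ℝ 1 G ∧
      ∀ z : I × I, ‖G ((z.1 : ℝ), (z.2 : ℝ)) - H z‖ ≤ ε := by
  have hcoord : ∀ (i : Fin k) (j : Fin 2), ∃ g : ℝ × ℝ → ℝ, ContDiff ℝ 1 g ∧
      ∀ z : I × I, |g ((z.1 : ℝ), (z.2 : ℝ)) - H z i j| ≤ ε := by
    intro i j
    exact scalar_approx ⟨fun z => H z i j, by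
      exact ((continuous_apply j).comp ((continuous_apply i).comp H.continuous))⟩ hε
  choose g hg1 hg2 using hcoord
  refine ⟨fun p i j => g i j p, ?_, ?_⟩
  · rw [contDiff_pi]
    intro i
    rw [contDiff_pi]
    intro j
    exact hg1 i j
  · intro z
    rw [pi_norm_le_iff_of_nonneg hε.le]
    intro i
    rw [pi_norm_le_iff_of_nonneg hε.le]
    intro j
    simpa [Real.norm_eq_abs] using hg2 i j z


section Perturb
open Metric Set Module
variable {k : ℕ}

lemma zero_not_inj (hk : 5 ≤ k) : (fun _ => (0:Plane) : Amb k) ∉ Fset k := by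
  intro hinj
  have h01 : (⟨0, by omega⟩ : Fin k) = ⟨1, by omega⟩ := hinj rfl
  simp [Fin.ext_iff] at h01

lemma zero_mem_Zset [NeZero k] : (0 : Amb k) ∈ Zset k := by
  intro i j
  simp [cross]

lemma perturb (hk : 5 ≤ k) [NeZero k] (H : C(I × I, Amb k)) (Γ : Set (I × I))
    (hΓc : IsClosed Γ) (hΓne : Γ.Nonempty)
    (hF : ∀ z, H z ∈ Fset k) (hE : ∀ z ∈ Γ, H z ∈ Eset k) :
    ∃ H' : C(I × I, Amb k),
      (∀ z, H' z ∈ Eset k) ∧ (∀ z ∈ Γ, H' z = H z) ∧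
      (∀ z : I × I, ∀ u : ℝ, u ∈ Set.Icc (0:ℝ) 1 →
        ((1 - u) • H z + u • H' z) ∈ Fset k) := by
  -- distance to the complement of F
  have hFc_closed : IsClosed (Fset k)ᶜ := isOpen_Fset.isClosed_compl
  have hFc_ne : (Fset k)ᶜ.Nonempty := ⟨fun _ => 0, zero_not_inj hk⟩
  have hφF : Continuous fun z : I × I => infDist (H z) (Fset k)ᶜ :=
    (continuous_infDist_pt _).comp H.continuous
  obtain ⟨z₀, -, hz₀⟩ := isCompact_univ.exists_isMinOn (univ_nonempty) hφF.continuousOn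
  set δF : ℝ := infDist (H z₀) (Fset k)ᶜ with hδF
  have hδF_pos : 0 < δF := by
    rcases lt_or_eq_of_le (infDist_nonneg (x := H z₀) (s := (Fset k)ᶜ)) with h | h
    · exact h
    · exact absurd ((hFc_closed.mem_iff_infDist_zero hFc_ne).mpr h.symm) (by
        simpa using hF z₀)
  have safety : ∀ (z : I × I) (y : Amb k), dist y (H z) < δF → y ∈ Fset k := by
    intro z y hy
    by_contra hyc
    have h1 : infDist (H z) (Fset k)ᶜ ≤ dist (H z) y := infDist_le_dist_of_mem hyc
    have h2 : δF ≤ infDist (H z) (Fset k)ᶜ := hz₀ (mem_univ z)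
    rw [dist_comm] at hy
    linarith
  -- distance from H(Γ) to Z
  have hΓcomp : IsCompact Γ := hΓc.isCompact
  have hZc : IsClosed (Zset k) := isClosed_Zset
  have hZne : (Zset k).Nonempty := ⟨0, zero_mem_Zset⟩
  have hφZ : Continuous fun z : I × I => infDist (H z) (Zset k) :=
    (continuous_infDist_pt _).comp H.continuous
  obtain ⟨zΓ, hzΓ, hzΓ'⟩ := hΓcomp.exists_isMinOn hΓne hφZ.continuousOn
  set δZ : ℝ := infDist (H zΓ) (Zset k) with hδZ
  have hδZ_pos : 0 < δZ := by
    rcases lt_or_eq_of_le (infDist_nonneg (x := H zΓ) (s := Zset k)) with h | h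
    · exact h
    · exact absurd ((hZc.mem_iff_infDist_zero hZne).mpr h.symm) (hE zΓ hzΓ).2
  -- collar
  set U : Set (I × I) := {z | δZ / 2 < infDist (H z) (Zset k)} with hU
  have hUopen : IsOpen U := isOpen_lt continuous_const hφZ
  have hΓU : Γ ⊆ U := fun z hz => by
    have : δZ ≤ infDist (H z) (Zset k) := hzΓ' hz
    simp only [hU, mem_setOf_eq]; linarith
  obtain ⟨ρ, hρ, hρsub⟩ := hΓcomp.exists_cthickening_subset_open hUopen hΓU
  have hcollar : ∀ z : I × I, infDist z Γ < ρ → δZ / 2 < infDist (H z) (Zset k) := by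
    intro z hz
    obtain ⟨y, hy, hy'⟩ := hΓcomp.exists_infDist_eq_dist hΓne z
    have : z ∈ cthickening ρ Γ :=
      mem_cthickening_of_dist_le z y ρ Γ hy (by rw [← hy']; exact hz.le)
    exact hρsub this
  -- the cutoff function
  set lam : I × I → ℝ := fun z => min 1 (infDist z Γ / ρ) with hlam
  have hlam_cont : Continuous lam :=
    continuous_const.min ((continuous_infDist_pt Γ).div_const ρ)
  have hlam_nonneg : ∀ z, 0 ≤ lam z :=
    fun z => le_min zero_le_one (div_nonneg infDist_nonneg hρ.le) |>.trans_eq' (by simp)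
  have hlam_le_one : ∀ z, lam z ≤ 1 := fun z => min_le_left _ _
  have hlam_zero : ∀ z ∈ Γ, lam z = 0 := by
    intro z hz
    simp [hlam, infDist_zero_of_mem hz]
  -- smoothing
  set ε₁ : ℝ := min (δZ / 8) (δF / 4) with hε₁
  have hε₁_pos : 0 < ε₁ := lt_min (by linarith) (by linarith)
  obtain ⟨G, hG, hGappr⟩ := smooth_approx H hε₁_pos
  -- the bad translation set
  set Ψ₁ : ((ℝ × ℝ) × (ℝ × ℝ) × (Fin k → ℝ)) → Amb k :=
    fun w => chartNV k w.2 - G w.1 with hΨ₁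
  set Ψ₂ : ((ℝ × ℝ) × ℝ × (Fin k → ℝ)) → Amb k :=
    fun w => chartV k w.2 - G w.1 with hΨ₂
  have hΨ₁smooth : ContDiff ℝ 1 Ψ₁ :=
    (contDiff_chartNV.comp contDiff_snd).sub (hG.comp contDiff_fst)
  have hΨ₂smooth : ContDiff ℝ 1 Ψ₂ :=
    (contDiff_chartV.comp contDiff_snd).sub (hG.comp contDiff_fst)
  have hdim : dimH (Set.range Ψ₁ ∪ Set.range Ψ₂) < (finrank ℝ (Amb k) : ℝ≥0∞) := by
    have h1 := hΨ₁smooth.dimH_range_le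
    have h2 := hΨ₂smooth.dimH_range_le
    have hfr1 : finrank ℝ ((ℝ × ℝ) × (ℝ × ℝ) × (Fin k → ℝ)) = 4 + k := by
      simp [Module.finrank_prod, Module.finrank_self, Module.finrank_fin_fun]
      omega
    have hfr2 : finrank ℝ ((ℝ × ℝ) × ℝ × (Fin k → ℝ)) = 3 + k := by
      simp [Module.finrank_prod, Module.finrank_self, Module.finrank_fin_fun]
      omega
    have hfrX : finrank ℝ (Amb k) = 2 * k := by
      simp [Module.finrank_pi_fintype, Module.finrank_fin_fun, Finset.sum_const]
      omega
    rw [dimH_union, hfrX]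
    rw [hfr1] at h1
    rw [hfr2] at h2
    have hc1 : ((4 + k : ℕ) : ℝ≥0∞) < ((2 * k : ℕ) : ℝ≥0∞) := by
      exact_mod_cast (by omega : 4 + k < 2 * k)
    have hc2 : ((3 + k : ℕ) : ℝ≥0∞) < ((2 * k : ℕ) : ℝ≥0∞) := by
      exact_mod_cast (by omega : 3 + k < 2 * k)
    exact max_lt (lt_of_le_of_lt h1 hc1) (lt_of_le_of_lt h2 hc2)
  have hdense : Dense (Set.range Ψ₁ ∪ Set.range Ψ₂)ᶜ := dense_compl_of_dimH_lt_finrank hdim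
  obtain ⟨v, hvB, hvball⟩ := hdense.exists_mem_open isOpen_ball ⟨0, mem_ball_self hε₁_pos⟩
  have hvnorm : ‖v‖ < ε₁ := by rwa [mem_ball_zero_iff] at hvball
  -- the perturbed map
  have hcoe : Continuous fun z : I × I => (((z.1 : ℝ)), ((z.2 : ℝ))) := by fun_prop
  set H' : C(I × I, Amb k) :=
    ⟨fun z => H z + lam z • (G ((z.1 : ℝ), (z.2 : ℝ)) - H z + v),
      H.continuous.add (hlam_cont.smul
        (((hG.continuous.comp hcoe).sub H.continuous).add continuous_const))⟩ with hH'
  have hdiff : ∀ z, ‖H' z - H z‖ ≤ 2 * ε₁ := by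
    intro z
    have h1 : H' z - H z = lam z • (G ((z.1 : ℝ), (z.2 : ℝ)) - H z + v) := by
      simp [hH']
    rw [h1, norm_smul]
    have h2 : ‖G ((z.1 : ℝ), (z.2 : ℝ)) - H z + v‖ ≤ ε₁ + ε₁ :=
      (norm_add_le _ _).trans (add_le_add (hGappr z) hvnorm.le)
    have h3 : ‖lam z‖ ≤ 1 := by
      rw [Real.norm_eq_abs, abs_of_nonneg (hlam_nonneg z)]
      exact hlam_le_one z
    calc ‖lam z‖ * ‖G ((z.1 : ℝ), (z.2 : ℝ)) - H z + v‖ ≤ 1 * (ε₁ + ε₁) :=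
          mul_le_mul h3 h2 (norm_nonneg _) zero_le_one
      _ = 2 * ε₁ := by ring
  have hδF_bound : 2 * ε₁ < δF := by
    have := min_le_right (δZ / 8) (δF / 4)
    rw [← hε₁] at this
    linarith
  have hδZ_bound : 2 * ε₁ ≤ δZ / 4 := by
    have := min_le_left (δZ / 8) (δF / 4)
    rw [← hε₁] at this
    linarith
  refine ⟨H', ?_, ?_, ?_⟩
  · -- values in Eset
    intro z
    constructor
    · -- injective
      have : dist (H' z) (H z) < δF := by
        rw [dist_eq_norm]
        exact lt_of_le_of_lt (hdiff z) hδF_bound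
      exact safety z (H' z) this
    · -- not in Z
      rcases lt_or_ge (infDist z Γ) ρ with hcase | hcase
      · intro hmem
        have h1 : δZ / 2 < infDist (H z) (Zset k) := hcollar z hcase
        have h2 : infDist (H z) (Zset k) ≤ dist (H z) (H' z) := infDist_le_dist_of_mem hmem
        rw [dist_comm, dist_eq_norm] at h2
        have := hdiff z
        linarith
      · -- λ = 1 here
        have hl1 : lam z = 1 := by
          have : (1:ℝ) ≤ infDist z Γ / ρ := (one_le_div hρ).mpr hcase
          simp [hlam, min_eq_left this]
        have hform : H' z = G ((z.1 : ℝ), (z.2 : ℝ)) + v := by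
          simp only [hH', ContinuousMap.coe_mk, hl1, one_smul]
          abel
        intro hmem
        rcases Zset_subset_charts hmem with ⟨w, hw⟩ | ⟨w, hw⟩
        · exact hvB (Or.inl ⟨(((z.1 : ℝ), (z.2 : ℝ)), w), by
            simp only [hΨ₁]
            rw [hw, hform]
            abel⟩)
        · exact hvB (Or.inr ⟨(((z.1 : ℝ), (z.2 : ℝ)), w), by
            simp only [hΨ₂]
            rw [hw, hform]
            abel⟩)
  · -- agrees on Γ
    intro z hz
    simp [hH', hlam_zero z hz]
  · -- segments stay in F
    intro z u hu
    have heq : ((1 - u) • H z + u • H' z) - H z = u • (H' z - H z) := by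
      rw [sub_smul, one_smul, smul_sub]
      abel
    have hnorm : dist ((1 - u) • H z + u • H' z) (H z) < δF := by
      rw [dist_eq_norm, heq, norm_smul]
      have h3 : ‖u‖ ≤ 1 := by
        rw [Real.norm_eq_abs, abs_of_nonneg hu.1]
        exact hu.2
      calc ‖u‖ * ‖H' z - H z‖ ≤ 1 * (2 * ε₁) :=
            mul_le_mul h3 (hdiff z) (norm_nonneg _) zero_le_one
        _ = 2 * ε₁ := by ring
        _ < δF := hδF_bound
    exact safety z _ hnorm

end Perturb
end Pi1Aux


section Main
open Metric Set Module CategoryTheory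
open scoped unitInterval

attribute [local instance] Path.Homotopic.setoid

/-- For `k ≥ 5`, the inclusion `E k ↪ F k` induces an isomorphism of fundamental groups
`π₁(E k, p) ≅ π₁(F k, p)` at any basepoint `p ∈ E k`;  consequently `π₁(E k)` is isomorphic
to the pure braid group `P k`. -/
theorem inclusion_induces_pi1_iso :
    ∀ k : ℕ, 5 ≤ k → ∀ p : SpanConf k,
      Function.Bijective (inducedPiOne (inclusionEF k) p) := by
  intro k hk p
  haveI : NeZero k := ⟨by omega⟩
  set f : C(SpanConf k, Conf k) := inclusionEF k with hf
  set p' : Conf k := f p with hp'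
  have hpmem : p.val ∈ Pi1Aux.Eset k := (Pi1Aux.mem_Eset_iff p.val).mpr p.2
  constructor
  · -- injectivity
    rw [injective_iff_map_eq_one]
    intro a ha
    obtain ⟨γ, hγ⟩ := Quotient.exists_rep (a : Path.Homotopic.Quotient p p)
    have h1 : (piFunctor f).map a = 𝟙 (FundamentalGroupoid.mk p') := by
      have h := ha
      exact h
    have h2 : (⟦γ.map f.continuous⟧ : Path.Homotopic.Quotient p' p') = ⟦Path.refl p'⟧ := by
      have e1 : (piFunctor f).map (⟦γ⟧ : Path.Homotopic.Quotient p p) = 𝟙 (FundamentalGroupoid.mk p') := by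
        rw [hγ]; exact h1
      exact e1
    obtain ⟨F⟩ : (γ.map f.continuous).Homotopic (Path.refl p') := Quotient.exact h2
    -- the ambient homotopy
    set H : C(I × I, Pi1Aux.Amb k) :=
      ⟨fun z => (F z).val, continuous_subtype_val.comp F.continuous⟩ with hH
    set Γ : Set (I × I) := {z | z.1 = 0 ∨ z.1 = 1 ∨ z.2 = 0 ∨ z.2 = 1} with hΓ
    have hΓc : IsClosed Γ := by
      apply IsClosed.union (isClosed_eq continuous_fst continuous_const)
      apply IsClosed.union (isClosed_eq continuous_fst continuous_const)
      exact IsClosed.union (isClosed_eq continuous_snd continuous_const)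
        (isClosed_eq continuous_snd continuous_const)
    have hΓne : Γ.Nonempty := ⟨(0, 0), Or.inl rfl⟩
    have hFmem : ∀ z, H z ∈ Pi1Aux.Fset k := fun z => (F z).2
    have hEmem : ∀ z ∈ Γ, H z ∈ Pi1Aux.Eset k := by
      rintro ⟨u, t⟩ hz
      rcases hz with h | h | h | h
      · simp only at h
        subst h
        have : F (0, t) = (γ.map f.continuous) t := F.apply_zero t
        show (F (0,t)).val ∈ _
        rw [this]
        exact (Pi1Aux.mem_Eset_iff _).mpr (γ t).2
      · simp only at h
        subst h
        have : F (1, t) = (Path.refl p') t := F.apply_one t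
        show (F (1,t)).val ∈ _
        rw [this]
        exact hpmem
      · simp only at h
        subst h
        have : F (u, 0) = p' := F.source u
        show (F (u,0)).val ∈ _
        rw [this]
        exact hpmem
      · simp only at h
        subst h
        have : F (u, 1) = p' := F.target u
        show (F (u,1)).val ∈ _
        rw [this]
        exact hpmem
    obtain ⟨H', hH'E, hH'Γ, -⟩ := Pi1Aux.perturb hk H Γ hΓc hΓne hFmem hEmem
    -- rebuild a homotopy inside SpanConf
    have hmem' : ∀ z, H' z ∈ {q : Fin k → Plane |
        Function.Injective q ∧ affineSpan ℝ (Set.range q) = ⊤} :=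
      fun z => (Pi1Aux.mem_Eset_iff _).mp (hH'E z)
    have hK : (γ.toContinuousMap).HomotopicRel (Path.refl p).toContinuousMap {0, 1} := by
      refine ⟨⟨⟨⟨fun z => ⟨H' z, hmem' z⟩, ?_⟩, ?_, ?_⟩, ?_⟩⟩
      · exact H'.continuous.subtype_mk _
      · -- map_zero_left
        intro t
        apply Subtype.ext
        show H' (0, t) = (γ t).val
        rw [hH'Γ (0, t) (Or.inl rfl)]
        show (F (0,t)).val = (γ t).val
        rw [F.apply_zero t]
        rfl
      · -- map_one_left
        intro t
        apply Subtype.ext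
        show H' (1, t) = ((Path.refl p) t).val
        rw [hH'Γ (1, t) (Or.inr (Or.inl rfl))]
        show (F (1,t)).val = p.val
        rw [F.apply_one t]
        rfl
      · -- prop'
        intro u x hx
        apply Subtype.ext
        rcases hx with h | h
        · subst h
          show H' (u, 0) = (γ 0).val
          rw [hH'Γ (u, 0) (Or.inr (Or.inr (Or.inl rfl)))]
          show (F (u,0)).val = (γ 0).val
          rw [F.source u, γ.source]
          rfl
        · simp only [Set.mem_singleton_iff] at h
          subst h
          show H' (u, 1) = (γ 1).val
          rw [hH'Γ (u, 1) (Or.inr (Or.inr (Or.inr rfl)))]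
          show (F (u,1)).val = (γ 1).val
          rw [F.target u, γ.target]
          rfl
    have h3 : (⟦γ⟧ : Path.Homotopic.Quotient p p) = ⟦Path.refl p⟧ := Quotient.sound hK
    show a = 𝟙 (FundamentalGroupoid.mk p)
    rw [← hγ, h3]
    exact (FundamentalGroupoid.id_eq_path_refl _).symm
  · -- surjectivity
    intro a
    obtain ⟨γ, hγ⟩ := Quotient.exists_rep (a : Path.Homotopic.Quotient p' p')
    set H : C(I × I, Pi1Aux.Amb k) :=
      ⟨fun z => (γ z.2).val, continuous_subtype_val.comp (γ.continuous.comp continuous_snd)⟩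
      with hH
    set Γ : Set (I × I) := {z | z.2 = 0 ∨ z.2 = 1} with hΓ
    have hΓc : IsClosed Γ :=
      IsClosed.union (isClosed_eq continuous_snd continuous_const)
        (isClosed_eq continuous_snd continuous_const)
    have hΓne : Γ.Nonempty := ⟨(0, 0), Or.inl rfl⟩
    have hFmem : ∀ z, H z ∈ Pi1Aux.Fset k := fun z => (γ z.2).2
    have hEmem : ∀ z ∈ Γ, H z ∈ Pi1Aux.Eset k := by
      rintro ⟨u, t⟩ hz
      rcases hz with h | h
      · simp only at h
        subst h
        show (γ 0).val ∈ _
        rw [γ.source]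
        exact hpmem
      · simp only at h
        subst h
        show (γ 1).val ∈ _
        rw [γ.target]
        exact hpmem
    obtain ⟨H', hH'E, hH'Γ, hseg⟩ := Pi1Aux.perturb hk H Γ hΓc hΓne hFmem hEmem
    have hmem' : ∀ z, H' z ∈ {q : Fin k → Plane |
        Function.Injective q ∧ affineSpan ℝ (Set.range q) = ⊤} :=
      fun z => (Pi1Aux.mem_Eset_iff _).mp (hH'E z)
    -- the new loop in SpanConf
    set δ : Path p p :=
      { toFun := fun t => ⟨H' (0, t), hmem' (0, t)⟩
        continuous_toFun := H'.continuous.comp (Continuous.prodMk_right 0) |>.subtype_mk _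
        source' := by
          apply Subtype.ext
          show H' (0, 0) = p.val
          rw [hH'Γ (0, 0) (Or.inl rfl)]
          show (γ 0).val = p.val
          rw [γ.source]
          rfl
        target' := by
          apply Subtype.ext
          show H' (0, 1) = p.val
          rw [hH'Γ (0, 1) (Or.inr rfl)]
          show (γ 1).val = p.val
          rw [γ.target]
          rfl } with hδ
    -- the straight-line homotopy between δ.map f and γ, inside Conf k
    have hsegmem : ∀ z : I × I,
        ((1 - (1 - (z.1 : ℝ))) • H (0, z.2) + (1 - (z.1 : ℝ)) • H' (0, z.2))
          ∈ Pi1Aux.Fset k := by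
      intro z
      apply hseg (0, z.2) (1 - (z.1 : ℝ))
      constructor
      · linarith [(z.1).2.2]
      · linarith [(z.1).2.1]
    have hhomot : ((δ.map f.continuous).toContinuousMap).HomotopicRel
        γ.toContinuousMap {0, 1} := by
      refine ⟨⟨⟨⟨fun z => ⟨(1 - (1 - (z.1 : ℝ))) • H (0, z.2) + (1 - (z.1 : ℝ)) • H' (0, z.2),
        hsegmem z⟩, ?_⟩, ?_, ?_⟩, ?_⟩⟩
      · refine Continuous.subtype_mk ?_ _
        have hc1 : Continuous fun z : I × I => (z.1 : ℝ) :=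
          continuous_subtype_val.comp continuous_fst
        have hc2 : Continuous fun z : I × I => H (0, z.2) :=
          H.continuous.comp (Continuous.prodMk_right 0 |>.comp continuous_snd)
        have hc3 : Continuous fun z : I × I => H' (0, z.2) :=
          H'.continuous.comp (Continuous.prodMk_right 0 |>.comp continuous_snd)
        exact ((continuous_const.sub (continuous_const.sub hc1)).smul hc2).add
          ((continuous_const.sub hc1).smul hc3)
      · -- u = 0 : gives δ.map f
        intro t
        apply Subtype.ext
        show (1 - (1 - ((0:I) : ℝ))) • H (0, t) + (1 - ((0:I) : ℝ)) • H' (0, t)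
          = ((δ.map f.continuous) t).val
        have : ((δ.map f.continuous) t).val = H' (0, t) := rfl
        rw [this]
        norm_num
      · -- u = 1 : gives γ
        intro t
        apply Subtype.ext
        show (1 - (1 - ((1:I) : ℝ))) • H (0, t) + (1 - ((1:I) : ℝ)) • H' (0, t)
          = (γ t).val
        have : H (0, t) = (γ t).val := rfl
        rw [← this]
        norm_num
      · -- endpoints fixed
        intro u x hx
        apply Subtype.ext
        have hfix : H' (0, x) = H (0, x) := by
          rcases hx with h | h
          · subst h; exact hH'Γ (0, 0) (Or.inl rfl)
          · simp only [Set.mem_singleton_iff] at h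
            subst h; exact hH'Γ (0, 1) (Or.inr rfl)
        show (1 - (1 - (u : ℝ))) • H (0, x) + (1 - (u : ℝ)) • H' (0, x)
          = ((δ.map f.continuous) x).val
        have hval : ((δ.map f.continuous) x).val = H' (0, x) := rfl
        rw [hval, hfix, ← add_smul]
        norm_num
    refine ⟨(FundamentalGroup.fromPath (⟦δ⟧ : Path.Homotopic.Quotient p p) : FundamentalGroup (SpanConf k) p), ?_⟩
    show (piFunctor f).map (⟦δ⟧ : Path.Homotopic.Quotient p p) = a
    rw [← hγ]
    exact Quotient.sound hhomot
end Main
end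

section
/- For every k ≥ 2, the space C_k = F_k ∖ E_k of ordered k-tuples of pairwise distinct points of ℝ² that all lie on a common line is a topological manifold of dimension k + 2: every point of C_k has an open neighborhood (in the subspace topology of C_k) homeomorphic to an open subset of ℝ^{k+2}. -/
/-- `C k = F k ∖ E k`: ordered `k`-tuples of pairwise distinct points of the plane that do
not affinely span the plane, i.e. that all lie on a common line. -/
abbrev LineConf (k : ℕ) : Type :=
  {p : Fin k → Plane // Function.Injective p ∧ affineSpan ℝ (Set.range p) ≠ ⊤}

namespace LCAux

variable {k : ℕ}

/-- The `t`-coefficient of the `j`-th point read off from a parameter vector `c`: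
`t 0 = 0`, `t 1 = 1`, and `t j = c (j+2)` otherwise. -/
def tc (c : Fin (k + 2) → ℝ) (j : Fin k) : ℝ :=
  if j.val = 0 then 0 else if j.val = 1 then 1 else c ⟨j.val + 2, by omega⟩

/-- Forward map: from parameters `c = (a, v, t₂, …)` to the configuration
`j ↦ a + t j • v`. -/
noncomputable def fwd (hk : 2 ≤ k) (c : Fin (k + 2) → ℝ) : Fin k → Plane :=
  fun j m => c ⟨m.val, by have := m.isLt; omega⟩ +
    tc c j * c ⟨m.val + 2, by have := m.isLt; omega⟩

/-- The coefficient `t` such that `p j = p 0 + t • (p 1 - p 0)`, recovered via the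
dot-product formula. -/
noncomputable def tval (hk : 2 ≤ k) (p : Fin k → Plane) (j : Fin k) : ℝ :=
  ((p j 0 - p ⟨0, by omega⟩ 0) * (p ⟨1, by omega⟩ 0 - p ⟨0, by omega⟩ 0) +
     (p j 1 - p ⟨0, by omega⟩ 1) * (p ⟨1, by omega⟩ 1 - p ⟨0, by omega⟩ 1)) /
  ((p ⟨1, by omega⟩ 0 - p ⟨0, by omega⟩ 0) ^ 2 + (p ⟨1, by omega⟩ 1 - p ⟨0, by omega⟩ 1) ^ 2)

/-- Backward map: from a configuration to parameters. -/
noncomputable def bwd (hk : 2 ≤ k) (p : Fin k → Plane) (i : Fin (k + 2)) : ℝ :=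
  if i.val = 0 then p ⟨0, by omega⟩ 0
  else if i.val = 1 then p ⟨0, by omega⟩ 1
  else if i.val = 2 then p ⟨1, by omega⟩ 0 - p ⟨0, by omega⟩ 0
  else if i.val = 3 then p ⟨1, by omega⟩ 1 - p ⟨0, by omega⟩ 1
  else tval hk p ⟨i.val - 2, by have := i.isLt; omega⟩

/-- The parameter set: direction vector nonzero, `t`-coefficients pairwise distinct. -/
def paramSet (hk : 2 ≤ k) : Set (Fin (k + 2) → ℝ) :=
  {c | (c ⟨2, by omega⟩ ≠ 0 ∨ c ⟨3, by omega⟩ ≠ 0) ∧ Function.Injective (tc c)}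

lemma tc_zero (hk : 2 ≤ k) (c : Fin (k + 2) → ℝ) : tc c ⟨0, by omega⟩ = 0 := by
  simp [tc]

lemma tc_one (hk : 2 ≤ k) (c : Fin (k + 2) → ℝ) : tc c ⟨1, by omega⟩ = 1 := by
  simp [tc]

lemma finrank_plane : Module.finrank ℝ Plane = 2 := Module.finrank_fin_fun ℝ

/-- The direction vector `p 1 - p 0` of an injective configuration is nonzero. -/
lemma vne (hk : 2 ≤ k) (p : Fin k → Plane) (hinj : Function.Injective p) :
    p ⟨1, by omega⟩ 0 - p ⟨0, by omega⟩ 0 ≠ 0 ∨ p ⟨1, by omega⟩ 1 - p ⟨0, by omega⟩ 1 ≠ 0 := by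
  by_contra h
  push_neg at h
  obtain ⟨h0, h1⟩ := h
  have : p ⟨1, by omega⟩ = p ⟨0, by omega⟩ := by
    funext m
    fin_cases m
    · simpa [sub_eq_zero] using h0
    · simpa [sub_eq_zero] using h1
  have := hinj this
  simp [Fin.ext_iff] at this

lemma denom_pos (hk : 2 ≤ k) (p : Fin k → Plane) (hinj : Function.Injective p) :
    0 < (p ⟨1, by omega⟩ 0 - p ⟨0, by omega⟩ 0) ^ 2 +
      (p ⟨1, by omega⟩ 1 - p ⟨0, by omega⟩ 1) ^ 2 := by
  rcases vne hk p hinj with h | h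
  · positivity
  · positivity

/-- If `p j = p 0 + t • (p 1 - p 0)` then `tval` recovers `t`. -/
lemma tval_eq (hk : 2 ≤ k) (p : Fin k → Plane) (j : Fin k) (t : ℝ)
    (hv : p ⟨1, by omega⟩ 0 - p ⟨0, by omega⟩ 0 ≠ 0 ∨
      p ⟨1, by omega⟩ 1 - p ⟨0, by omega⟩ 1 ≠ 0)
    (ht : ∀ m : Fin 2, p j m = p ⟨0, by omega⟩ m + t * (p ⟨1, by omega⟩ m - p ⟨0, by omega⟩ m)) :
    tval hk p j = t := by
  have hd : (p ⟨1, by omega⟩ 0 - p ⟨0, by omega⟩ 0) ^ 2 +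
      (p ⟨1, by omega⟩ 1 - p ⟨0, by omega⟩ 1) ^ 2 ≠ 0 := by
    rcases hv with h | h
    · positivity
    · positivity
  rw [tval, ht 0, ht 1]
  field_simp
  ring

/-- A configuration with non-spanning affine span is collinear. -/
lemma collinear_of_ne_top (hk : 2 ≤ k) (p : Fin k → Plane)
    (hsp : affineSpan ℝ (Set.range p) ≠ ⊤) : Collinear ℝ (Set.range p) := by
  by_contra hcol
  apply hsp
  have : ¬ Module.finrank ℝ (vectorSpan ℝ (Set.range p)) ≤ 1 := by
    intro h
    exact hcol (collinear_iff_finrank_le_one.2 h)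
  have h2 : 2 ≤ Module.finrank ℝ (vectorSpan ℝ (Set.range p)) := by omega
  have hle : Module.finrank ℝ (vectorSpan ℝ (Set.range p)) ≤ Module.finrank ℝ Plane :=
    Submodule.finrank_le _
  rw [finrank_plane] at hle
  have htop : vectorSpan ℝ (Set.range p) = ⊤ := by
    apply Submodule.eq_top_of_finrank_eq
    rw [finrank_plane]
    omega
  have hne : (Set.range p).Nonempty := ⟨p ⟨0, by omega⟩, Set.mem_range_self _⟩
  exact (AffineSubspace.affineSpan_eq_top_iff_vectorSpan_eq_top_of_nonempty ℝ Plane Plane hne).2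
    htop

/-- Every point of a collinear injective configuration decomposes as
`p j = p 0 + t * (p 1 - p 0)`. -/
lemma exists_coeff (hk : 2 ≤ k) (p : Fin k → Plane) (hinj : Function.Injective p)
    (hsp : affineSpan ℝ (Set.range p) ≠ ⊤) (j : Fin k) :
    ∃ t : ℝ, ∀ m : Fin 2,
      p j m = p ⟨0, by omega⟩ m + t * (p ⟨1, by omega⟩ m - p ⟨0, by omega⟩ m) := by
  have hcol := collinear_of_ne_top hk p hsp
  rw [collinear_iff_of_mem (Set.mem_range_self (⟨0, by omega⟩ : Fin k))] at hcol
  obtain ⟨v, hv⟩ := hcol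
  obtain ⟨r1, hr1⟩ := hv (p ⟨1, by omega⟩) (Set.mem_range_self _)
  obtain ⟨rj, hrj⟩ := hv (p j) (Set.mem_range_self _)
  have hr1ne : r1 ≠ 0 := by
    intro h
    rw [h, zero_smul, zero_vadd] at hr1
    have := hinj hr1
    simp [Fin.ext_iff] at this
  refine ⟨rj / r1, fun m => ?_⟩
  have e1 : p ⟨1, by omega⟩ m - p ⟨0, by omega⟩ m = r1 * v m := by
    rw [hr1]; simp [vadd_eq_add]
  have ej : p j m = rj * v m + p ⟨0, by omega⟩ m := by
    rw [hrj]; simp [vadd_eq_add]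
  rw [ej, e1]
  field_simp
  ring

/-- Round trip: `fwd ∘ bwd = id` on configurations. -/
lemma fwd_bwd (hk : 2 ≤ k) (p : Fin k → Plane) (hinj : Function.Injective p)
    (hsp : affineSpan ℝ (Set.range p) ≠ ⊤) (j : Fin k) :
    fwd hk (bwd hk p) j = p j := by
  obtain ⟨t, ht⟩ := exists_coeff hk p hinj hsp j
  have hv := vne hk p hinj
  funext m
  have hb0 : ∀ m : Fin 2, bwd hk p ⟨m.val, by have := m.isLt; omega⟩ =
      p ⟨0, by omega⟩ m := by
    intro m; fin_cases m <;> simp [bwd]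
  have hb2 : ∀ m : Fin 2, bwd hk p ⟨m.val + 2, by have := m.isLt; omega⟩ =
      p ⟨1, by omega⟩ m - p ⟨0, by omega⟩ m := by
    intro m; fin_cases m <;> simp [bwd]
  show bwd hk p ⟨m.val, by have := m.isLt; omega⟩ +
    tc (bwd hk p) j * bwd hk p ⟨m.val + 2, by have := m.isLt; omega⟩ = p j m
  rw [hb0, hb2]
  by_cases h0 : j.val = 0
  · have hj : j = ⟨0, by omega⟩ := Fin.ext h0
    simp only [tc, if_pos h0]
    rw [hj]; ring
  · by_cases h1 : j.val = 1
    · have hj : j = ⟨1, by omega⟩ := Fin.ext h1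
      simp only [tc, if_neg h0, if_pos h1]
      rw [hj]; ring
    · simp only [tc, if_neg h0, if_neg h1]
      have : bwd hk p ⟨j.val + 2, by omega⟩ = tval hk p j := by
        have hj4 : ¬ (j.val + 2 = 0) := by omega
        have hj5 : ¬ (j.val + 2 = 1) := by omega
        have hj6 : ¬ (j.val + 2 = 2) := by omega
        have hj7 : ¬ (j.val + 2 = 3) := by omega
        simp only [bwd, hj4, hj5, hj6, hj7, if_false]
        congr 1
      rw [this, tval_eq hk p j t hv ht, ht m]

/-- The backward map lands in the parameter set. -/
lemma bwd_mem (hk : 2 ≤ k) (p : Fin k → Plane) (hinj : Function.Injective p)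
    (hsp : affineSpan ℝ (Set.range p) ≠ ⊤) : bwd hk p ∈ paramSet hk := by
  constructor
  · have h2 : bwd hk p ⟨2, by omega⟩ = p ⟨1, by omega⟩ 0 - p ⟨0, by omega⟩ 0 := by
      simp [bwd]
    have h3 : bwd hk p ⟨3, by omega⟩ = p ⟨1, by omega⟩ 1 - p ⟨0, by omega⟩ 1 := by
      simp [bwd]
    rw [h2, h3]
    exact vne hk p hinj
  · intro j j' h
    apply hinj
    have e1 := fwd_bwd hk p hinj hsp j
    have e2 := fwd_bwd hk p hinj hsp j'
    rw [← e1, ← e2]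
    funext m
    show bwd hk p ⟨m.val, by have := m.isLt; omega⟩ +
        tc (bwd hk p) j * bwd hk p ⟨m.val + 2, by have := m.isLt; omega⟩ =
      bwd hk p ⟨m.val, by have := m.isLt; omega⟩ +
        tc (bwd hk p) j' * bwd hk p ⟨m.val + 2, by have := m.isLt; omega⟩
    rw [h]

/-- Round trip: `bwd ∘ fwd = id` on parameters. -/
lemma bwd_fwd (hk : 2 ≤ k) (c : Fin (k + 2) → ℝ) (hc : c ∈ paramSet hk) :
    bwd hk (fwd hk c) = c := by
  have h00 : fwd hk c ⟨0, by omega⟩ 0 = c ⟨0, by omega⟩ := by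
    show c ⟨0, by omega⟩ + tc c ⟨0, by omega⟩ * c ⟨2, by omega⟩ = c ⟨0, by omega⟩
    rw [tc_zero hk]; ring
  have h01 : fwd hk c ⟨0, by omega⟩ 1 = c ⟨1, by omega⟩ := by
    show c ⟨1, by omega⟩ + tc c ⟨0, by omega⟩ * c ⟨3, by omega⟩ = c ⟨1, by omega⟩
    rw [tc_zero hk]; ring
  have h10 : fwd hk c ⟨1, by omega⟩ 0 = c ⟨0, by omega⟩ + c ⟨2, by omega⟩ := by
    show c ⟨0, by omega⟩ + tc c ⟨1, by omega⟩ * c ⟨2, by omega⟩ =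
      c ⟨0, by omega⟩ + c ⟨2, by omega⟩
    rw [tc_one hk]; ring
  have h11 : fwd hk c ⟨1, by omega⟩ 1 = c ⟨1, by omega⟩ + c ⟨3, by omega⟩ := by
    show c ⟨1, by omega⟩ + tc c ⟨1, by omega⟩ * c ⟨3, by omega⟩ =
      c ⟨1, by omega⟩ + c ⟨3, by omega⟩
    rw [tc_one hk]; ring
  funext i
  by_cases e0 : i.val = 0
  · have hi : i = ⟨0, by omega⟩ := Fin.ext e0
    rw [hi]
    show fwd hk c ⟨0, by omega⟩ 0 = c ⟨0, by omega⟩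
    exact h00
  · by_cases e1 : i.val = 1
    · have hi : i = ⟨1, by omega⟩ := Fin.ext e1
      rw [hi]
      show fwd hk c ⟨0, by omega⟩ 1 = c ⟨1, by omega⟩
      exact h01
    · by_cases e2 : i.val = 2
      · have hi : i = ⟨2, by omega⟩ := Fin.ext e2
        rw [hi]
        show fwd hk c ⟨1, by omega⟩ 0 - fwd hk c ⟨0, by omega⟩ 0 = c ⟨2, by omega⟩
        rw [h10, h00]; ring
      · by_cases e3 : i.val = 3
        · have hi : i = ⟨3, by omega⟩ := Fin.ext e3
          rw [hi]
          show fwd hk c ⟨1, by omega⟩ 1 - fwd hk c ⟨0, by omega⟩ 1 = c ⟨3, by omega⟩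
          rw [h11, h01]; ring
        · -- i.val ≥ 4
          have hi4 : 4 ≤ i.val := by omega
          simp only [bwd, e0, e1, e2, e3, if_false]
          set j : Fin k := ⟨i.val - 2, by have := i.isLt; omega⟩ with hj
          have hvne : fwd hk c ⟨1, by omega⟩ 0 - fwd hk c ⟨0, by omega⟩ 0 ≠ 0 ∨
              fwd hk c ⟨1, by omega⟩ 1 - fwd hk c ⟨0, by omega⟩ 1 ≠ 0 := by
            rw [h10, h00, h01, h11]
            simpa using hc.1
          have ht : ∀ m : Fin 2, fwd hk c j m = fwd hk c ⟨0, by omega⟩ m +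
              tc c j * (fwd hk c ⟨1, by omega⟩ m - fwd hk c ⟨0, by omega⟩ m) := by
            intro m
            fin_cases m
            · show c ⟨0, by omega⟩ + tc c j * c ⟨2, by omega⟩ =
                (c ⟨0, by omega⟩ + tc c (⟨0, by omega⟩ : Fin k) * c ⟨2, by omega⟩) +
                  tc c j * ((c ⟨0, by omega⟩ + tc c (⟨1, by omega⟩ : Fin k) * c ⟨2, by omega⟩) -
                    (c ⟨0, by omega⟩ + tc c (⟨0, by omega⟩ : Fin k) * c ⟨2, by omega⟩))
              rw [tc_zero hk, tc_one hk]; ring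
            · show c ⟨1, by omega⟩ + tc c j * c ⟨3, by omega⟩ =
                (c ⟨1, by omega⟩ + tc c (⟨0, by omega⟩ : Fin k) * c ⟨3, by omega⟩) +
                  tc c j * ((c ⟨1, by omega⟩ + tc c (⟨1, by omega⟩ : Fin k) * c ⟨3, by omega⟩) -
                    (c ⟨1, by omega⟩ + tc c (⟨0, by omega⟩ : Fin k) * c ⟨3, by omega⟩))
              rw [tc_zero hk, tc_one hk]; ring
          rw [tval_eq hk (fwd hk c) j (tc c j) hvne ht]
          have hj0 : ¬ (j.val = 0) := by simp [hj]; omega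
          have hj1 : ¬ (j.val = 1) := by simp [hj]; omega
          simp only [tc, hj0, hj1, if_false]
          congr 1
          exact Fin.ext (by simp [hj]; omega)

/-- The forward map lands in `LineConf`. -/
lemma fwd_mem (hk : 2 ≤ k) (c : Fin (k + 2) → ℝ) (hc : c ∈ paramSet hk) :
    Function.Injective (fwd hk c) ∧ affineSpan ℝ (Set.range (fwd hk c)) ≠ ⊤ := by
  obtain ⟨hv, hti⟩ := hc
  have key : ∀ j j' : Fin k, fwd hk c j = fwd hk c j' → tc c j = tc c j' := by
    intro j j' h
    rcases hv with h2 | h3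
    · have h' : c ⟨0, by omega⟩ + tc c j * c ⟨2, by omega⟩ =
          c ⟨0, by omega⟩ + tc c j' * c ⟨2, by omega⟩ := congrFun h 0
      exact mul_right_cancel₀ h2 (add_left_cancel h')
    · have h' : c ⟨1, by omega⟩ + tc c j * c ⟨3, by omega⟩ =
          c ⟨1, by omega⟩ + tc c j' * c ⟨3, by omega⟩ := congrFun h 1
      exact mul_right_cancel₀ h3 (add_left_cancel h')
  constructor
  · intro j j' h
    exact hti (key j j' h)
  · -- collinearity
    intro htop
    have hcol : Collinear ℝ (Set.range (fwd hk c)) := by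
      rw [collinear_iff_of_mem (Set.mem_range_self (⟨0, by omega⟩ : Fin k))]
      refine ⟨fun m => c ⟨m.val + 2, by have := m.isLt; omega⟩, ?_⟩
      rintro q ⟨j, rfl⟩
      refine ⟨tc c j, ?_⟩
      funext m
      show fwd hk c j m = (tc c j • fun m : Fin 2 =>
          c ⟨m.val + 2, by have := m.isLt; omega⟩) m + fwd hk c ⟨0, by omega⟩ m
      show c ⟨m.val, by have := m.isLt; omega⟩ +
          tc c j * c ⟨m.val + 2, by have := m.isLt; omega⟩ =
        tc c j * c ⟨m.val + 2, by have := m.isLt; omega⟩ +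
          (c ⟨m.val, by have := m.isLt; omega⟩ +
            tc c (⟨0, by omega⟩ : Fin k) * c ⟨m.val + 2, by have := m.isLt; omega⟩)
      rw [tc_zero hk]
      ring
    have h1 := hcol.finrank_le_one
    have : vectorSpan ℝ (Set.range (fwd hk c)) = ⊤ := by
      have hne : (Set.range (fwd hk c)).Nonempty :=
        ⟨_, Set.mem_range_self (⟨0, by omega⟩ : Fin k)⟩
      exact (AffineSubspace.affineSpan_eq_top_iff_vectorSpan_eq_top_of_nonempty ℝ Plane Plane
        hne).1 htop
    rw [this, finrank_top, finrank_plane] at h1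
    omega

lemma tc_continuous (j : Fin k) : Continuous fun c : Fin (k + 2) → ℝ => tc c j := by
  by_cases h0 : j.val = 0
  · simp only [tc, if_pos h0]; exact continuous_const
  · by_cases h1 : j.val = 1
    · simp only [tc, if_neg h0, if_pos h1]; exact continuous_const
    · simp only [tc, if_neg h0, if_neg h1]; exact continuous_apply _

lemma fwd_continuous (hk : 2 ≤ k) : Continuous fun c : Fin (k + 2) → ℝ => fwd hk c := by
  apply continuous_pi
  intro j
  apply continuous_pi
  intro m
  exact ((continuous_apply _).add ((tc_continuous j).mul (continuous_apply _)))

lemma bwd_continuous (hk : 2 ≤ k) :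
    Continuous fun x : LineConf k => bwd hk x.1 := by
  apply continuous_pi
  intro i
  have c00 : Continuous fun x : LineConf k => x.1 ⟨0, by omega⟩ (0 : Fin 2) :=
    (continuous_apply (0 : Fin 2)).comp ((continuous_apply _).comp continuous_subtype_val)
  have c01 : Continuous fun x : LineConf k => x.1 ⟨0, by omega⟩ (1 : Fin 2) :=
    (continuous_apply (1 : Fin 2)).comp ((continuous_apply _).comp continuous_subtype_val)
  have c10 : Continuous fun x : LineConf k => x.1 ⟨1, by omega⟩ (0 : Fin 2) :=
    (continuous_apply (0 : Fin 2)).comp ((continuous_apply _).comp continuous_subtype_val)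
  have c11 : Continuous fun x : LineConf k => x.1 ⟨1, by omega⟩ (1 : Fin 2) :=
    (continuous_apply (1 : Fin 2)).comp ((continuous_apply _).comp continuous_subtype_val)
  by_cases e0 : i.val = 0
  · simp only [bwd, e0, if_true]; exact c00
  · by_cases e1 : i.val = 1
    · simp only [bwd, e0, e1, if_false, if_true]; exact c01
    · by_cases e2 : i.val = 2
      · simp only [bwd, e0, e1, e2, if_false, if_true]; exact c10.sub c00
      · by_cases e3 : i.val = 3
        · simp only [bwd, e0, e1, e2, e3, if_false, if_true]; exact c11.sub c01
        · simp only [bwd, e0, e1, e2, e3, if_false]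
          set j : Fin k := ⟨i.val - 2, by have := i.isLt; omega⟩
          have cj0 : Continuous fun x : LineConf k => x.1 j (0 : Fin 2) :=
            (continuous_apply (0 : Fin 2)).comp ((continuous_apply _).comp continuous_subtype_val)
          have cj1 : Continuous fun x : LineConf k => x.1 j (1 : Fin 2) :=
            (continuous_apply (1 : Fin 2)).comp ((continuous_apply _).comp continuous_subtype_val)
          apply Continuous.div
          · exact ((cj0.sub c00).mul (c10.sub c00)).add ((cj1.sub c01).mul (c11.sub c01))
          · exact ((c10.sub c00).pow 2).add ((c11.sub c01).pow 2)
          · intro x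
            exact ne_of_gt (denom_pos hk x.1 x.2.1)

lemma paramSet_isOpen (hk : 2 ≤ k) : IsOpen (paramSet hk) := by
  have h1 : IsOpen {c : Fin (k + 2) → ℝ | c ⟨2, by omega⟩ ≠ 0 ∨ c ⟨3, by omega⟩ ≠ 0} := by
    have ha : IsOpen {c : Fin (k + 2) → ℝ | c ⟨2, by omega⟩ ≠ 0} :=
      isOpen_ne_fun (continuous_apply _) continuous_const
    have hb : IsOpen {c : Fin (k + 2) → ℝ | c ⟨3, by omega⟩ ≠ 0} :=
      isOpen_ne_fun (continuous_apply _) continuous_const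
    exact ha.union hb
  have h2 : IsOpen {c : Fin (k + 2) → ℝ | Function.Injective (tc c)} := by
    have : {c : Fin (k + 2) → ℝ | Function.Injective (tc c)} =
        ⋂ (j : Fin k), ⋂ (j' : Fin k),
          {c : Fin (k + 2) → ℝ | j = j' ∨ tc c j ≠ tc c j'} := by
      ext c
      simp only [Set.mem_iInter, Set.mem_setOf_eq]
      constructor
      · intro hinj j j'
        by_cases h : j = j'
        · exact Or.inl h
        · exact Or.inr fun he => h (hinj he)
      · intro h j j' he
        rcases h j j' with h' | h'
        · exact h'
        · exact absurd he h'
    rw [this]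
    apply isOpen_iInter_of_finite
    intro j
    apply isOpen_iInter_of_finite
    intro j'
    by_cases h : j = j'
    · have : {c : Fin (k + 2) → ℝ | j = j' ∨ tc c j ≠ tc c j'} = Set.univ := by
        ext c; simp [h]
      rw [this]; exact isOpen_univ
    · have : {c : Fin (k + 2) → ℝ | j = j' ∨ tc c j ≠ tc c j'} =
          {c : Fin (k + 2) → ℝ | tc c j ≠ tc c j'} := by
        ext c; simp [h]
      rw [this]
      exact isOpen_ne_fun (tc_continuous j) (tc_continuous j')
  exact h1.inter h2

/-- The global chart: `LineConf k` is homeomorphic to the open parameter set. -/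
noncomputable def chart (hk : 2 ≤ k) : LineConf k ≃ₜ ↥(paramSet hk) where
  toFun x := ⟨bwd hk x.1, bwd_mem hk x.1 x.2.1 x.2.2⟩
  invFun c := ⟨fwd hk c.1, fwd_mem hk c.1 c.2⟩
  left_inv x := Subtype.ext (funext fun j => fwd_bwd hk x.1 x.2.1 x.2.2 j)
  right_inv c := Subtype.ext (bwd_fwd hk c.1 c.2)
  continuous_toFun := Continuous.subtype_mk (bwd_continuous hk) _
  continuous_invFun :=
    Continuous.subtype_mk ((fwd_continuous hk).comp continuous_subtype_val) _

end LCAux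

/-- For `k ≥ 2`, the space `C k = F k ∖ E k` of collinear configurations is a topological
manifold of dimension `k + 2`: every point has an open neighborhood homeomorphic to an open
subset of `ℝ^(k+2)`. -/
theorem lineConf_is_manifold_dim_add_two :
    ∀ k : ℕ, 2 ≤ k → ∀ x : LineConf k,
      ∃ U : Set (LineConf k), IsOpen U ∧ x ∈ U ∧
        ∃ V : Set (Fin (k + 2) → ℝ), IsOpen V ∧ Nonempty (↥U ≃ₜ ↥V) := by
  intro k hk x
  refine ⟨Set.univ, isOpen_univ, Set.mem_univ x, LCAux.paramSet hk,
    LCAux.paramSet_isOpen hk, ⟨?_⟩⟩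
  exact (Homeomorph.Set.univ (LineConf k)).trans (LCAux.chart hk)
end

section
/- The space A_4 of oriented affine configurations of 4 distinct points in the real plane is homeomorphic to the complement of a 12-point subset of the 2-sphere S²: there exists a subset V ⊆ S² with exactly 12 elements such that A_4 is homeomorphic to S² ∖ V. -/
open Matrix

/-- `E 4`: injective 4-tuples of points affinely spanning the plane. -/
abbrev SpanConf4 : Type :=
  {p : Fin 4 → Plane // Function.Injective p ∧ affineSpan ℝ (Set.range p) = ⊤}

/-- The group `Aff₊(ℝ²)` of orientation preserving affine transformations `x ↦ A x + b`
(`A` a 2×2 real matrix with positive determinant, `b ∈ ℝ²`). -/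
structure AffP : Type where
  A : Matrix (Fin 2) (Fin 2) ℝ
  b : Plane
  det_pos : 0 < A.det

/-- An affine transformation applied as a map of the plane, `x ↦ A x + b`. -/
def AffP.app (g : AffP) (x : Plane) : Plane := g.A.mulVec x + g.b

/-- The orbit relation of the componentwise action of `Aff₊(ℝ²)` on `E 4`. -/
def affRel4 (p q : SpanConf4) : Prop :=
  ∃ g : AffP, ∀ i : Fin 4, g.app (p.1 i) = q.1 i

/-- `A 4 = E 4 / Aff₊(ℝ²)`: the space of oriented affine configurations of `4` distinct
points in the real plane, with the quotient topology. -/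
abbrev AffConf4 : Type := Quot affRel4

/-- The unit 2-sphere in ℝ³. -/
abbrev Sphere2 : Set (EuclideanSpace ℝ (Fin 3)) := Metric.sphere 0 1

lemma AffP.app_apply (g : AffP) (x : Plane) (j : Fin 2) :
    g.app x j = g.A j 0 * x 0 + g.A j 1 * x 1 + g.b j := by
  simp [AffP.app, Matrix.mulVec, dotProduct, Fin.sum_univ_two]
  fin_cases j <;> rfl

def dd (u v w : Plane) : ℝ := (v 0 - u 0) * (w 1 - u 1) - (w 0 - u 0) * (v 1 - u 1)
def wt (p : Fin 4 → Plane) : Fin 4 → ℝ := fun i =>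
  if i = 0 then dd (p 1) (p 2) (p 3)
  else if i = 1 then -dd (p 0) (p 2) (p 3)
  else if i = 2 then dd (p 0) (p 1) (p 3)
  else -dd (p 0) (p 1) (p 2)
lemma wt0 (p : Fin 4 → Plane) : wt p 0 = dd (p 1) (p 2) (p 3) := rfl
lemma wt1 (p : Fin 4 → Plane) : wt p 1 = -dd (p 0) (p 2) (p 3) := rfl
lemma wt2 (p : Fin 4 → Plane) : wt p 2 = dd (p 0) (p 1) (p 3) := rfl
lemma wt3 (p : Fin 4 → Plane) : wt p 3 = -dd (p 0) (p 1) (p 2) := rfl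
lemma wt_sum (p : Fin 4 → Plane) : wt p 0 + wt p 1 + wt p 2 + wt p 3 = 0 := by
  simp only [wt0, wt1, wt2, wt3, dd]; ring
lemma wt_combo (p : Fin 4 → Plane) (x : Fin 2) :
    wt p 0 * p 0 x + wt p 1 * p 1 x + wt p 2 * p 2 x + wt p 3 * p 3 x = 0 := by
  fin_cases x
  · show wt p 0 * p 0 0 + wt p 1 * p 1 0 + wt p 2 * p 2 0 + wt p 3 * p 3 0 = 0
    simp only [wt0, wt1, wt2, wt3, dd]; ring
  · show wt p 0 * p 0 1 + wt p 1 * p 1 1 + wt p 2 * p 2 1 + wt p 3 * p 3 1 = 0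
    simp only [wt0, wt1, wt2, wt3, dd]; ring

lemma wt_sum' (p : Fin 4 → Plane) : ∑ k, wt p k = 0 := by
  rw [Fin.sum_univ_four]; exact wt_sum p

lemma wt_combo' (p : Fin 4 → Plane) : ∑ k, wt p k • p k = 0 := by
  funext x
  rw [Finset.sum_apply, Fin.sum_univ_four]
  simpa using wt_combo p x

/-- four points on a parabola -/
def tpar (σ : ℝ) : Fin 4 → Plane := fun m => ![(m.val : ℝ), σ * (m.val : ℝ) ^ 2]
lemma tpar_0 (σ : ℝ) (m : Fin 4) : tpar σ m 0 = (m.val : ℝ) := rfl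
lemma tpar_1 (σ : ℝ) (m : Fin 4) : tpar σ m 1 = σ * (m.val : ℝ) ^ 2 := rfl

def Sf (σ : ℝ) (lam : Fin 4 → ℝ) : Plane := fun x =>
  lam 0 * tpar σ 0 x + lam 1 * tpar σ 1 x + lam 2 * tpar σ 2 x + lam 3 * tpar σ 3 x

noncomputable def sec (l : Fin 4) (σ : ℝ) (lam : Fin 4 → ℝ) : Fin 4 → Plane := fun m =>
  if m = l then tpar σ l - (lam l)⁻¹ • Sf σ lam else tpar σ m

lemma sec_ne_l {l m : Fin 4} (σ : ℝ) (lam : Fin 4 → ℝ) (hm : m ≠ l) :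
    sec l σ lam m = tpar σ m := if_neg hm
lemma sec_l (l : Fin 4) (σ : ℝ) (lam : Fin 4 → ℝ) :
    sec l σ lam l = tpar σ l - (lam l)⁻¹ • Sf σ lam := if_pos rfl

lemma Sf_eq_sum (σ : ℝ) (lam : Fin 4 → ℝ) : Sf σ lam = ∑ k, lam k • tpar σ k := by
  funext x
  rw [Finset.sum_apply, Fin.sum_univ_four]
  simp [Sf]

lemma sec_combo' {l : Fin 4} {σ : ℝ} {lam : Fin 4 → ℝ} (hl : lam l ≠ 0) :
    ∑ m, lam m • sec l σ lam m = 0 := by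
  have split : ∀ m : Fin 4, lam m • sec l σ lam m
      = lam m • tpar σ m + (if m = l then lam l • (sec l σ lam l - tpar σ l) else 0) := by
    intro m
    by_cases h : m = l
    · subst h; rw [if_pos rfl, smul_sub]; abel
    · rw [sec_ne_l σ lam h, if_neg h, add_zero]
  rw [Finset.sum_congr rfl (fun m _ => split m), Finset.sum_add_distrib,
    Finset.sum_ite_eq' Finset.univ l, if_pos (Finset.mem_univ l), sec_l]
  have : lam l • (tpar σ l - (lam l)⁻¹ • Sf σ lam - tpar σ l) = -Sf σ lam := by
    rw [sub_sub_cancel_left, smul_neg, smul_smul, mul_inv_cancel₀ hl, one_smul]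
  rw [this, Sf_eq_sum, add_neg_cancel]

lemma vand {σ : ℝ} (hσ : σ = 1 ∨ σ = -1) {r s u : ℝ} (hrs : r ≠ s) (hru : r ≠ u)
    (hsu : s ≠ u) {a b c : ℝ} (h1 : a + b + c = 0)
    (h2 : a * r + b * s + c * u = 0)
    (h3 : a * (σ * r ^ 2) + b * (σ * s ^ 2) + c * (σ * u ^ 2) = 0) :
    a = 0 ∧ b = 0 ∧ c = 0 := by
  have hσ0 : σ ≠ 0 := by rcases hσ with h | h <;> (rw [h]; norm_num)
  have h3'' : σ * (a * r ^ 2 + b * s ^ 2 + c * u ^ 2) = 0 := by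
    linear_combination h3
  have h3' := (mul_eq_zero.mp h3'').resolve_left hσ0
  have hc : c * ((u - r) * (u - s)) = 0 := by
    linear_combination h3' - (r + s) * h2 + (r * s) * h1
  have hc0 : c = 0 := by
    rcases mul_eq_zero.mp hc with h | h
    · exact h
    · exact absurd h (mul_ne_zero (sub_ne_zero.mpr (Ne.symm hru))
        (sub_ne_zero.mpr (Ne.symm hsu)))
  subst hc0
  have hb : b * (s - r) = 0 := by
    linear_combination h2 - r * h1
  have hb0 : b = 0 := by
    rcases mul_eq_zero.mp hb with h | h
    · exact h
    · exact absurd h (sub_ne_zero.mpr (Ne.symm hrs))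
  subst hb0
  refine ⟨by linarith, rfl, rfl⟩

lemma fin3cast : (((3 : Fin 4).val : ℕ) : ℝ) = 3 := rfl

lemma wt_sec {l : Fin 4} {σ : ℝ} {lam : Fin 4 → ℝ} (hσ : σ = 1 ∨ σ = -1) (hl : lam l ≠ 0)
    (hsum : lam 0 + lam 1 + lam 2 + lam 3 = 0) :
    wt (sec l σ lam) = (wt (sec l σ lam) l / lam l) • lam := by
  set q := sec l σ lam with hq
  set t : ℝ := wt q l / lam l with ht
  set ν : Fin 4 → ℝ := fun k => wt q k - t * lam k with hν
  have hνl : ν l = 0 := by simp only [hν, ht, div_mul_cancel₀ _ hl, sub_self]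
  have hνsum : ν 0 + ν 1 + ν 2 + ν 3 = 0 := by
    simp only [hν]; linear_combination wt_sum q - t * hsum
  have hcomb : ∑ k, ν k • q k = 0 := by
    have h1 := wt_combo' q
    have h2 := sec_combo' (σ := σ) hl
    have e : ∑ k, ν k • q k = ∑ k, wt q k • q k - t • ∑ k, lam k • q k := by
      rw [Finset.smul_sum, ← Finset.sum_sub_distrib]
      apply Finset.sum_congr rfl
      intro k _
      simp only [hν, sub_smul, smul_smul]
    rw [e, h1, zero_sub, hq, h2, smul_zero, neg_zero]
  have hpar : ∑ k, ν k • tpar σ k = 0 := by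
    rw [← hcomb]
    apply Finset.sum_congr rfl
    intro k _
    by_cases hk : k = l
    · subst hk; rw [hνl, zero_smul, zero_smul]
    · rw [hq, sec_ne_l σ lam hk]
  have hx0 := congrFun hpar 0
  have hx1 := congrFun hpar 1
  simp only [Finset.sum_apply, Fin.sum_univ_four, Pi.smul_apply, smul_eq_mul, tpar_0, tpar_1,
    Pi.zero_apply] at hx0 hx1
  norm_num [fin3cast] at hx0 hx1
  suffices hall : ∀ k, ν k = 0 by
    funext k
    have h := hall k
    simp only [hν] at h
    simp only [Pi.smul_apply, smul_eq_mul, ← ht]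
    linarith
  have hσ' : σ = 1 ∨ σ = -1 := hσ
  fin_cases l
  · have hνl' : ν 0 = 0 := hνl
    obtain ⟨h1, h2, h3⟩ := vand hσ' (show (1:ℝ) ≠ 2 by norm_num) (show (1:ℝ) ≠ 3 by norm_num)
      (show (2:ℝ) ≠ 3 by norm_num) (a := ν 1) (b := ν 2) (c := ν 3)
      (by linear_combination hνsum - hνl')
      (by linear_combination hx0)
      (by linear_combination hx1)
    intro k; fin_cases k
    · exact hνl'
    · exact h1
    · exact h2
    · exact h3
  · have hνl' : ν 1 = 0 := hνl
    obtain ⟨h1, h2, h3⟩ := vand hσ' (show (0:ℝ) ≠ 2 by norm_num) (show (0:ℝ) ≠ 3 by norm_num)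
      (show (2:ℝ) ≠ 3 by norm_num) (a := ν 0) (b := ν 2) (c := ν 3)
      (by linear_combination hνsum - hνl')
      (by linear_combination hx0 - 1 * hνl')
      (by linear_combination hx1 - σ * hνl')
    intro k; fin_cases k
    · exact h1
    · exact hνl'
    · exact h2
    · exact h3
  · have hνl' : ν 2 = 0 := hνl
    obtain ⟨h1, h2, h3⟩ := vand hσ' (show (0:ℝ) ≠ 1 by norm_num) (show (0:ℝ) ≠ 3 by norm_num)
      (show (1:ℝ) ≠ 3 by norm_num) (a := ν 0) (b := ν 1) (c := ν 3)
      (by linear_combination hνsum - hνl')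
      (by linear_combination hx0 - 2 * hνl')
      (by linear_combination hx1 - (4 * σ) * hνl')
    intro k; fin_cases k
    · exact h1
    · exact h2
    · exact hνl'
    · exact h3
  · have hνl' : ν 3 = 0 := hνl
    obtain ⟨h1, h2, h3⟩ := vand hσ' (show (0:ℝ) ≠ 1 by norm_num) (show (0:ℝ) ≠ 2 by norm_num)
      (show (1:ℝ) ≠ 2 by norm_num) (a := ν 0) (b := ν 1) (c := ν 2)
      (by linear_combination hνsum - hνl')
      (by linear_combination hx0 - 3 * hνl')
      (by linear_combination hx1 - (9 * σ) * hνl')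
    intro k; fin_cases k
    · exact h1
    · exact h2
    · exact h3
    · exact hνl'

lemma wt_sec_l (l : Fin 4) (σ : ℝ) (lam : Fin 4 → ℝ) :
    wt (sec l σ lam) l = ![2, -6, 6, -2] l * σ := by
  fin_cases l
  · show wt (sec 0 σ lam) 0 = 2 * σ
    rw [wt0, sec_ne_l σ lam (by decide), sec_ne_l σ lam (by decide), sec_ne_l σ lam (by decide)]
    norm_num [dd, tpar_0, tpar_1, fin3cast]; ring
  · show wt (sec 1 σ lam) 1 = -6 * σ
    rw [wt1, sec_ne_l σ lam (by decide), sec_ne_l σ lam (by decide), sec_ne_l σ lam (by decide)]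
    norm_num [dd, tpar_0, tpar_1, fin3cast]; ring
  · show wt (sec 2 σ lam) 2 = 6 * σ
    rw [wt2, sec_ne_l σ lam (by decide), sec_ne_l σ lam (by decide), sec_ne_l σ lam (by decide)]
    norm_num [dd, tpar_0, tpar_1, fin3cast]; ring
  · show wt (sec 3 σ lam) 3 = -2 * σ
    rw [wt3, sec_ne_l σ lam (by decide), sec_ne_l σ lam (by decide), sec_ne_l σ lam (by decide)]
    norm_num [dd, tpar_0, tpar_1, fin3cast]; ring

lemma dd_zero {u v w : Plane} (h : u = v ∨ u = w ∨ v = w) : dd u v w = 0 := by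
  rcases h with h | h | h <;> (subst h; simp only [dd]; ring)

lemma wt_zero_of_eq {p : Fin 4 → Plane} {i j : Fin 4} (hij : i ≠ j) (hp : p i = p j)
    {k : Fin 4} (hki : k ≠ i) (hkj : k ≠ j) : wt p k = 0 := by
  fin_cases k <;> fin_cases i <;> fin_cases j <;>
    first
    | exact absurd rfl hij | exact absurd rfl hki | exact absurd rfl hkj
    | exact dd_zero (Or.inl hp) | exact dd_zero (Or.inr (Or.inl hp))
    | exact dd_zero (Or.inr (Or.inr hp))
    | exact dd_zero (Or.inl hp.symm) | exact dd_zero (Or.inr (Or.inl hp.symm))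
    | exact dd_zero (Or.inr (Or.inr hp.symm))
    | exact neg_eq_zero.mpr (dd_zero (Or.inl hp))
    | exact neg_eq_zero.mpr (dd_zero (Or.inr (Or.inl hp)))
    | exact neg_eq_zero.mpr (dd_zero (Or.inr (Or.inr hp)))
    | exact neg_eq_zero.mpr (dd_zero (Or.inl hp.symm))
    | exact neg_eq_zero.mpr (dd_zero (Or.inr (Or.inl hp.symm)))
    | exact neg_eq_zero.mpr (dd_zero (Or.inr (Or.inr hp.symm)))

lemma dd_map (g : AffP) (u v w : Plane) :
    dd (g.app u) (g.app v) (g.app w) = g.A.det * dd u v w := by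
  simp only [dd, AffP.app_apply, Matrix.det_fin_two]; ring

lemma wt_ne_zero' {p : Fin 4 → Plane} (hinj : p 0 ≠ p 1)
    (hspan : affineSpan ℝ (Set.range p) = ⊤)
    (h2 : dd (p 0) (p 1) (p 2) = 0) (h3 : dd (p 0) (p 1) (p 3) = 0) : False := by
  set v : Plane := ![p 0 0 - (p 1 1 - p 0 1), p 0 1 + (p 1 0 - p 0 0)] with hvdef
  have hv : v ∈ affineSpan ℝ (Set.range p) := by rw [hspan]; trivial
  obtain ⟨w, hw1, hwv⟩ := eq_affineCombination_of_mem_affineSpan_of_fintype hv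
  rw [Finset.affineCombination_eq_weightedVSubOfPoint_vadd_of_sum_eq_one _ _ _ hw1 (p 0),
    Finset.weightedVSubOfPoint_apply] at hwv
  have e0 := congrFun hwv 0
  have e1 := congrFun hwv 1
  simp only [hvdef, Fin.sum_univ_four, Pi.vadd_apply, Pi.smul_apply, vsub_eq_sub, vadd_eq_add,
    Pi.sub_apply, Pi.add_apply, smul_eq_mul, Matrix.cons_val_zero, Matrix.cons_val_one,
    Matrix.head_cons] at e0 e1
  have key : (p 1 0 - p 0 0) ^ 2 + (p 1 1 - p 0 1) ^ 2 = 0 := by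
    simp only [dd] at h2 h3
    linear_combination (p 1 0 - p 0 0) * e1 - (p 1 1 - p 0 1) * e0 + w 2 * h2 + w 3 * h3
  have c0 : p 0 0 = p 1 0 := by nlinarith [sq_nonneg (p 1 0 - p 0 0), sq_nonneg (p 1 1 - p 0 1)]
  have c1 : p 0 1 = p 1 1 := by nlinarith [sq_nonneg (p 1 0 - p 0 0), sq_nonneg (p 1 1 - p 0 1)]
  apply hinj
  funext x
  fin_cases x
  · exact c0
  · exact c1

lemma extend_rel (g : AffP) (lam : Fin 4 → ℝ) (u v : Fin 4 → Plane) (l : Fin 4)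
    (hl : lam l ≠ 0)
    (hsu : ∑ k, lam k • u k = 0) (hsv : ∑ k, lam k • v k = 0)
    (hsum : ∑ k, lam k = 0)
    (h : ∀ m, m ≠ l → g.app (u m) = v m) : g.app (u l) = v l := by
  have happ : ∑ k, lam k • g.app (u k) = 0 := by
    simp only [AffP.app]
    have e : ∀ k : Fin 4, lam k • (g.A.mulVec (u k) + g.b)
        = (Matrix.mulVecLin g.A) (lam k • u k) + lam k • g.b := by
      intro k; rw [smul_add, Matrix.mulVecLin_apply, Matrix.mulVec_smul]
    simp only [e, Finset.sum_add_distrib, ← Finset.sum_smul, hsum, zero_smul, add_zero,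
      ← map_sum, hsu, map_zero]
  have key : ∑ k, lam k • (g.app (u k) - v k) = 0 := by
    simp only [smul_sub, Finset.sum_sub_distrib, happ, hsv, sub_zero]
  have single : ∑ k, lam k • (g.app (u k) - v k) = lam l • (g.app (u l) - v l) := by
    refine Finset.sum_eq_single_of_mem l (Finset.mem_univ l) ?_
    intro m _ hm
    rw [h m hm, sub_self, smul_zero]
  rw [single] at key
  rcases smul_eq_zero.mp key with h' | h'
  · exact absurd h' hl
  · exact sub_eq_zero.mp h'

lemma exists_affp (u0 u1 u2 v0 v1 v2 : Plane)
    (hpos : 0 < dd u0 u1 u2 * dd v0 v1 v2) :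
    ∃ g : AffP, g.app u0 = v0 ∧ g.app u1 = v1 ∧ g.app u2 = v2 := by
  have hdu : dd u0 u1 u2 ≠ 0 := by
    intro h; rw [h, zero_mul] at hpos; exact lt_irrefl 0 hpos
  set du := dd u0 u1 u2 with hdu_def
  set M : Matrix (Fin 2) (Fin 2) ℝ :=
    !![(v1 0 - v0 0) * (u2 1 - u0 1) - (v2 0 - v0 0) * (u1 1 - u0 1),
       (v2 0 - v0 0) * (u1 0 - u0 0) - (v1 0 - v0 0) * (u2 0 - u0 0);
       (v1 1 - v0 1) * (u2 1 - u0 1) - (v2 1 - v0 1) * (u1 1 - u0 1),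
       (v2 1 - v0 1) * (u1 0 - u0 0) - (v1 1 - v0 1) * (u2 0 - u0 0)] with hM
  set A : Matrix (Fin 2) (Fin 2) ℝ := du⁻¹ • M with hA
  have hAe : ∀ j k : Fin 2, A j k = du⁻¹ * M j k := by intro j k; simp [hA]
  have hdet : A.det = du⁻¹ ^ 2 * (du * dd v0 v1 v2) := by
    rw [hA, Matrix.det_smul, hM, Matrix.det_fin_two_of]
    simp only [Fintype.card_fin, dd, hdu_def]
    ring
  have hdetpos : 0 < A.det := by
    rw [hdet]
    exact mul_pos
      (lt_of_le_of_ne (sq_nonneg _) (Ne.symm (pow_ne_zero 2 (inv_ne_zero hdu)))) hpos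
  set bb : Plane := v0 - A.mulVec u0 with hbb
  refine ⟨⟨A, bb, hdetpos⟩, ?_, ?_, ?_⟩ <;>
  · funext j
    have hb : ∀ j : Fin 2, bb j = v0 j - (A j 0 * u0 0 + A j 1 * u0 1) := by
      intro j
      simp [hbb, Matrix.mulVec, dotProduct, Fin.sum_univ_two]
      fin_cases j <;> rfl
    rw [AffP.app_apply]
    simp only [hb, hAe]
    fin_cases j <;>
    · simp only [hM, Matrix.cons_val', Matrix.cons_val_zero, Matrix.cons_val_one,
        Matrix.head_cons, Matrix.head_fin_const, Matrix.of_apply, Matrix.empty_val',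
        Matrix.cons_val_fin_one, Fin.zero_eta, Fin.mk_one]
      field_simp
      try simp only [dd, hdu_def]
      try ring


lemma wt_map (g : AffP) (p : Fin 4 → Plane) :
    wt (fun i => g.app (p i)) = fun k => g.A.det * wt p k := by
  funext k
  fin_cases k
  · show wt (fun i => g.app (p i)) 0 = g.A.det * wt p 0
    rw [wt0, wt0]; exact dd_map g _ _ _
  · show wt (fun i => g.app (p i)) 1 = g.A.det * wt p 1
    rw [wt1, wt1, dd_map]; ring
  · show wt (fun i => g.app (p i)) 2 = g.A.det * wt p 2
    rw [wt2, wt2]; exact dd_map g _ _ _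
  · show wt (fun i => g.app (p i)) 3 = g.A.det * wt p 3
    rw [wt3, wt3, dd_map]; ring

lemma wt_conf_ne_zero (p : SpanConf4) : wt p.1 ≠ 0 := by
  intro h
  refine wt_ne_zero' (p := p.1) ?_ p.2.2 ?_ ?_
  · intro he; exact absurd (p.2.1 he) (by decide)
  · have h3 := congrFun h 3
    rw [wt3] at h3
    exact neg_eq_zero.mp h3
  · have h2 := congrFun h 2
    rw [wt2] at h2
    exact h2

lemma span_top_of_dd {q : Fin 4 → Plane} {i j k : Fin 4}
    (h : dd (q i) (q j) (q k) ≠ 0) : affineSpan ℝ (Set.range q) = ⊤ := by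
  rw [eq_top_iff]
  intro v _
  have hi : q i ∈ affineSpan ℝ (Set.range q) := mem_affineSpan ℝ ⟨i, rfl⟩
  have hj : q j ∈ affineSpan ℝ (Set.range q) := mem_affineSpan ℝ ⟨j, rfl⟩
  have hk : q k ∈ affineSpan ℝ (Set.range q) := mem_affineSpan ℝ ⟨k, rfl⟩
  set du := dd (q i) (q j) (q k) with hdu
  set a : ℝ := ((v 0 - q i 0) * (q k 1 - q i 1) - (q k 0 - q i 0) * (v 1 - q i 1)) / du with ha
  set b : ℝ := ((q j 0 - q i 0) * (v 1 - q i 1) - (v 0 - q i 0) * (q j 1 - q i 1)) / du with hb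
  have hv : v = a • (q j -ᵥ q i) +ᵥ (b • (q k -ᵥ q i) +ᵥ q i) := by
    funext x
    simp only [vsub_eq_sub, vadd_eq_add, Pi.add_apply, Pi.smul_apply, Pi.sub_apply, smul_eq_mul]
    have hdu' : dd (q i) (q j) (q k) ≠ 0 := h
    fin_cases x
    · show v 0 = a * (q j 0 - q i 0) + (b * (q k 0 - q i 0) + q i 0)
      rw [ha, hb, hdu]
      field_simp
      simp only [dd]
      ring
    · show v 1 = a * (q j 1 - q i 1) + (b * (q k 1 - q i 1) + q i 1)
      rw [ha, hb, hdu]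
      field_simp
      simp only [dd]
      ring
  rw [hv]
  exact AffineSubspace.smul_vsub_vadd_mem _ a hj hi
    (AffineSubspace.smul_vsub_vadd_mem _ b hk hi hi)

def NotPar (lam : Fin 4 → ℝ) : Prop := ∀ i j : Fin 4, i ≠ j → ∃ k, k ≠ i ∧ k ≠ j ∧ lam k ≠ 0

lemma inj_of_wt {q : Fin 4 → Plane} {lam : Fin 4 → ℝ} {c : ℝ} (hc : c ≠ 0)
    (hwt : wt q = c • lam) (hnp : NotPar lam) : Function.Injective q := by
  intro i j hij
  by_contra hne
  obtain ⟨k, hki, hkj, hk⟩ := hnp i j hne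
  have h0 : wt q k = 0 := wt_zero_of_eq hne hij hki hkj
  rw [hwt, Pi.smul_apply, smul_eq_mul] at h0
  rcases mul_eq_zero.mp h0 with h' | h'
  · exact hc h'
  · exact hk h'

lemma notpar_conf (p : SpanConf4) : NotPar (wt p.1) := by
  intro i j hij
  by_contra hcon
  push_neg at hcon
  have hwij : wt p.1 = fun k =>
      (if k = i then wt p.1 i else 0) + (if k = j then wt p.1 j else 0) := by
    funext k
    by_cases h1 : k = i
    · subst h1; rw [if_pos rfl, if_neg hij, add_zero]
    · by_cases h2 : k = j
      · subst h2; rw [if_neg h1, if_pos rfl, zero_add]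
      · rw [if_neg h1, if_neg h2, add_zero, hcon k h1 h2]
  have hsum0 : wt p.1 i + wt p.1 j = 0 := by
    have hs := wt_sum' p.1
    rw [hwij, Finset.sum_add_distrib, Finset.sum_ite_eq' Finset.univ,
      Finset.sum_ite_eq' Finset.univ, if_pos (Finset.mem_univ i),
      if_pos (Finset.mem_univ j)] at hs
    exact hs
  have hine : wt p.1 i ≠ 0 := by
    intro h0
    apply wt_conf_ne_zero p
    rw [hwij]
    funext k
    have hji : wt p.1 j = 0 := by linarith
    rw [h0, hji]
    simp
  have hcmb := wt_combo' p.1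
  rw [hwij] at hcmb
  simp only [add_smul, ite_smul, zero_smul, Finset.sum_add_distrib,
    Finset.sum_ite_eq' Finset.univ, if_pos (Finset.mem_univ i),
    if_pos (Finset.mem_univ j)] at hcmb
  have hjj : wt p.1 j = -wt p.1 i := by linarith
  rw [hjj, neg_smul, ← sub_eq_add_neg, ← smul_sub] at hcmb
  rcases smul_eq_zero.mp hcmb with h' | h'
  · exact hine h'
  · exact hij (p.2.1 (sub_eq_zero.mp h'))

def par : Fin 4 → ℝ := ![1, -1, 1, -1]

noncomputable def sg (l : Fin 4) (lam : Fin 4 → ℝ) : ℝ :=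
  if 0 < par l * lam l then 1 else -1

lemma sg_pm (l : Fin 4) (lam : Fin 4 → ℝ) : sg l lam = 1 ∨ sg l lam = -1 := by
  unfold sg; split
  · exact Or.inl rfl
  · exact Or.inr rfl

lemma sg_smul (l : Fin 4) (lam : Fin 4 → ℝ) {c : ℝ} (hc : 0 < c) :
    sg l (c • lam) = sg l lam := by
  unfold sg
  have he : par l * ((c • lam) l) = c * (par l * lam l) := by
    simp [Pi.smul_apply, smul_eq_mul]; ring
  simp only [he, mul_pos_iff_of_pos_left hc]

lemma sec_mem {l : Fin 4} {σ : ℝ} {lam : Fin 4 → ℝ} (hσ : σ = 1 ∨ σ = -1)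
    (hl : lam l ≠ 0) (hsum : lam 0 + lam 1 + lam 2 + lam 3 = 0) (hnp : NotPar lam) :
    Function.Injective (sec l σ lam) ∧ affineSpan ℝ (Set.range (sec l σ lam)) = ⊤ := by
  have hσ0 : σ ≠ 0 := by rcases hσ with h | h <;> (rw [h]; norm_num)
  have hvalne : wt (sec l σ lam) l ≠ 0 := by
    rw [wt_sec_l]
    refine mul_ne_zero ?_ hσ0
    fin_cases l <;> norm_num
  constructor
  · exact inj_of_wt (div_ne_zero hvalne hl) (wt_sec hσ hl hsum) hnp
  · fin_cases l
    · exact span_top_of_dd (i := 1) (j := 2) (k := 3)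
        (show dd (sec 0 σ lam 1) (sec 0 σ lam 2) (sec 0 σ lam 3) ≠ 0 from hvalne)
    · exact span_top_of_dd (i := 0) (j := 2) (k := 3)
        (fun h => hvalne (neg_eq_zero.mpr h))
    · exact span_top_of_dd (i := 0) (j := 1) (k := 3)
        (show dd (sec 2 σ lam 0) (sec 2 σ lam 1) (sec 2 σ lam 3) ≠ 0 from hvalne)
    · exact span_top_of_dd (i := 0) (j := 1) (k := 2)
        (fun h => hvalne (neg_eq_zero.mpr h))

lemma sg_mul_pos (l : Fin 4) (lam : Fin 4 → ℝ) (hl : lam l ≠ 0) (cpos : ℝ) (hcpos : 0 < cpos) :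
    0 < (cpos * sg l lam) * (par l * lam l) := by
  have hne : par l * lam l ≠ 0 := mul_ne_zero (by fin_cases l <;> norm_num [par]) hl
  unfold sg
  rcases hne.lt_or_gt with hneg | hpos
  · rw [if_neg (not_lt.mpr hneg.le)]; nlinarith
  · rw [if_pos hpos]; nlinarith

lemma nf_spec (p : SpanConf4) (l : Fin 4) (hl : wt p.1 l ≠ 0) :
    ∀ hmem : Function.Injective (sec l (sg l (wt p.1)) (wt p.1)) ∧
        affineSpan ℝ (Set.range (sec l (sg l (wt p.1)) (wt p.1))) = ⊤,
      affRel4 ⟨sec l (sg l (wt p.1)) (wt p.1), hmem⟩ p := by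
  intro hmem
  fin_cases l
  · have hl' : wt p.1 0 ≠ 0 := hl
    have hdt : dd (tpar (sg 0 (wt p.1)) 1) (tpar (sg 0 (wt p.1)) 2) (tpar (sg 0 (wt p.1)) 3)
        = 2 * sg 0 (wt p.1) := by
      norm_num [dd, tpar_0, tpar_1, fin3cast]; ring
    have hsign : 0 < dd (tpar (sg 0 (wt p.1)) 1) (tpar (sg 0 (wt p.1)) 2)
        (tpar (sg 0 (wt p.1)) 3) * dd (p.1 1) (p.1 2) (p.1 3) := by
      have hp := sg_mul_pos 0 (wt p.1) hl' 2 (by norm_num)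
      have hpar0 : par 0 = 1 := rfl
      rw [hpar0, one_mul] at hp
      have hdp : dd (p.1 1) (p.1 2) (p.1 3) = wt p.1 0 := (wt0 p.1).symm
      rw [hdt, hdp]
      exact hp
    obtain ⟨g, hg0, hg1, hg2⟩ := exists_affp _ _ _ _ _ _ hsign
    refine ⟨g, ?_⟩
    intro m
    fin_cases m
    · refine extend_rel g (wt p.1) (sec 0 (sg 0 (wt p.1)) (wt p.1)) p.1 0 hl'
        (sec_combo' hl') (wt_combo' p.1) (wt_sum' p.1) ?_
      intro m hm
      fin_cases m
      · exact absurd rfl hm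
      · exact hg0
      · exact hg1
      · exact hg2
    · exact hg0
    · exact hg1
    · exact hg2
  · have hl' : wt p.1 1 ≠ 0 := hl
    have hdt : dd (tpar (sg 1 (wt p.1)) 0) (tpar (sg 1 (wt p.1)) 2) (tpar (sg 1 (wt p.1)) 3)
        = 6 * sg 1 (wt p.1) := by
      norm_num [dd, tpar_0, tpar_1, fin3cast]; ring
    have hsign : 0 < dd (tpar (sg 1 (wt p.1)) 0) (tpar (sg 1 (wt p.1)) 2)
        (tpar (sg 1 (wt p.1)) 3) * dd (p.1 0) (p.1 2) (p.1 3) := by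
      have hp := sg_mul_pos 1 (wt p.1) hl' 6 (by norm_num)
      have hpar1 : par 1 = -1 := rfl
      rw [hpar1] at hp
      have hdp : dd (p.1 0) (p.1 2) (p.1 3) = -wt p.1 1 := by rw [wt1]; ring
      rw [hdt, hdp]
      nlinarith [hp]
    obtain ⟨g, hg0, hg1, hg2⟩ := exists_affp _ _ _ _ _ _ hsign
    refine ⟨g, ?_⟩
    intro m
    fin_cases m
    · exact hg0
    · refine extend_rel g (wt p.1) (sec 1 (sg 1 (wt p.1)) (wt p.1)) p.1 1 hl'
        (sec_combo' hl') (wt_combo' p.1) (wt_sum' p.1) ?_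
      intro m hm
      fin_cases m
      · exact hg0
      · exact absurd rfl hm
      · exact hg1
      · exact hg2
    · exact hg1
    · exact hg2
  · have hl' : wt p.1 2 ≠ 0 := hl
    have hdt : dd (tpar (sg 2 (wt p.1)) 0) (tpar (sg 2 (wt p.1)) 1) (tpar (sg 2 (wt p.1)) 3)
        = 6 * sg 2 (wt p.1) := by
      norm_num [dd, tpar_0, tpar_1, fin3cast]; ring
    have hsign : 0 < dd (tpar (sg 2 (wt p.1)) 0) (tpar (sg 2 (wt p.1)) 1)
        (tpar (sg 2 (wt p.1)) 3) * dd (p.1 0) (p.1 1) (p.1 3) := by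
      have hp := sg_mul_pos 2 (wt p.1) hl' 6 (by norm_num)
      have hpar2 : par 2 = 1 := rfl
      rw [hpar2, one_mul] at hp
      have hdp : dd (p.1 0) (p.1 1) (p.1 3) = wt p.1 2 := (wt2 p.1).symm
      rw [hdt, hdp]
      exact hp
    obtain ⟨g, hg0, hg1, hg2⟩ := exists_affp _ _ _ _ _ _ hsign
    refine ⟨g, ?_⟩
    intro m
    fin_cases m
    · exact hg0
    · exact hg1
    · refine extend_rel g (wt p.1) (sec 2 (sg 2 (wt p.1)) (wt p.1)) p.1 2 hl'
        (sec_combo' hl') (wt_combo' p.1) (wt_sum' p.1) ?_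
      intro m hm
      fin_cases m
      · exact hg0
      · exact hg1
      · exact absurd rfl hm
      · exact hg2
    · exact hg2
  · have hl' : wt p.1 3 ≠ 0 := hl
    have hdt : dd (tpar (sg 3 (wt p.1)) 0) (tpar (sg 3 (wt p.1)) 1) (tpar (sg 3 (wt p.1)) 2)
        = 2 * sg 3 (wt p.1) := by
      norm_num [dd, tpar_0, tpar_1, fin3cast]; ring
    have hsign : 0 < dd (tpar (sg 3 (wt p.1)) 0) (tpar (sg 3 (wt p.1)) 1)
        (tpar (sg 3 (wt p.1)) 2) * dd (p.1 0) (p.1 1) (p.1 2) := by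
      have hp := sg_mul_pos 3 (wt p.1) hl' 2 (by norm_num)
      have hpar3 : par 3 = -1 := rfl
      rw [hpar3] at hp
      have hdp : dd (p.1 0) (p.1 1) (p.1 2) = -wt p.1 3 := by rw [wt3]; ring
      rw [hdt, hdp]
      nlinarith [hp]
    obtain ⟨g, hg0, hg1, hg2⟩ := exists_affp _ _ _ _ _ _ hsign
    refine ⟨g, ?_⟩
    intro m
    fin_cases m
    · exact hg0
    · exact hg1
    · exact hg2
    · refine extend_rel g (wt p.1) (sec 3 (sg 3 (wt p.1)) (wt p.1)) p.1 3 hl'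
        (sec_combo' hl') (wt_combo' p.1) (wt_sum' p.1) ?_
      intro m hm
      fin_cases m
      · exact hg0
      · exact hg1
      · exact hg2
      · exact absurd rfl hm

abbrev E3 := EuclideanSpace ℝ (Fin 3)

noncomputable def m3 (a b c : ℝ) : E3 := (WithLp.equiv 2 (Fin 3 → ℝ)).symm ![a, b, c]
lemma m3_0 (a b c : ℝ) : m3 a b c 0 = a := rfl
lemma m3_1 (a b c : ℝ) : m3 a b c 1 = b := rfl
lemma m3_2 (a b c : ℝ) : m3 a b c 2 = c := rfl

lemma e3_ext {u v : E3} (h0 : u 0 = v 0) (h1 : u 1 = v 1) (h2 : u 2 = v 2) :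
    u = v := by
  apply PiLp.ext; intro x
  fin_cases x
  · exact h0
  · exact h1
  · exact h2

lemma norm_m3 (a b c : ℝ) : ‖m3 a b c‖ = Real.sqrt (a ^ 2 + b ^ 2 + c ^ 2) := by
  rw [EuclideanSpace.norm_eq]
  congr 1
  rw [Fin.sum_univ_three]
  simp only [m3_0, m3_1, m3_2, Real.norm_eq_abs, sq_abs]

noncomputable def Lm (x : Fin 4 → ℝ) : E3 :=
  m3 (x 0 + x 1 - x 2 - x 3) (x 0 - x 1 + x 2 - x 3) (x 0 - x 1 - x 2 + x 3)

lemma Lm_eq_zero {x : Fin 4 → ℝ} (hs : x 0 + x 1 + x 2 + x 3 = 0) (h : Lm x = 0) : x = 0 := by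
  have h0 : x 0 + x 1 - x 2 - x 3 = 0 := congrArg (· 0) h
  have h1 : x 0 - x 1 + x 2 - x 3 = 0 := congrArg (· 1) h
  have h2 : x 0 - x 1 - x 2 + x 3 = 0 := congrArg (· 2) h
  funext k
  fin_cases k
  · show x 0 = 0; linarith
  · show x 1 = 0; linarith
  · show x 2 = 0; linarith
  · show x 3 = 0; linarith

lemma Lm_smul (c : ℝ) (x : Fin 4 → ℝ) : Lm (c • x) = c • Lm x := by
  refine e3_ext ?_ ?_ ?_ <;>
  · rw [PiLp.smul_apply, smul_eq_mul]
    simp only [Lm, m3_0, m3_1, m3_2, Pi.smul_apply, smul_eq_mul]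
    ring

lemma Lm_sub (x y : Fin 4 → ℝ) : Lm (x - y) = Lm x - Lm y := by
  refine e3_ext ?_ ?_ ?_ <;>
  · rw [PiLp.sub_apply]
    simp only [Lm, m3_0, m3_1, m3_2, Pi.sub_apply]
    ring

lemma Lm_inj_sum0 {x y : Fin 4 → ℝ} (hx : x 0 + x 1 + x 2 + x 3 = 0)
    (hy : y 0 + y 1 + y 2 + y 3 = 0) (h : Lm x = Lm y) : x = y := by
  have hz : x - y = 0 := by
    refine Lm_eq_zero ?_ ?_
    · simp only [Pi.sub_apply]; linarith
    · rw [Lm_sub, h, sub_self]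
  exact sub_eq_zero.mp hz

noncomputable def Rv (y : E3) : Fin 4 → ℝ := fun k =>
  if k = 0 then y 0 + y 1 + y 2
  else if k = 1 then y 0 - y 1 - y 2
  else if k = 2 then -y 0 + y 1 - y 2
  else -y 0 - y 1 + y 2

lemma Rv_0 (y : E3) : Rv y 0 = y 0 + y 1 + y 2 := rfl
lemma Rv_1 (y : E3) : Rv y 1 = y 0 - y 1 - y 2 := rfl
lemma Rv_2 (y : E3) : Rv y 2 = -y 0 + y 1 - y 2 := rfl
lemma Rv_3 (y : E3) : Rv y 3 = -y 0 - y 1 + y 2 := rfl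

lemma Rv_sum (y : E3) : Rv y 0 + Rv y 1 + Rv y 2 + Rv y 3 = 0 := by
  simp only [Rv_0, Rv_1, Rv_2, Rv_3]; ring

lemma Lm_Rv (y : E3) : Lm (Rv y) = (4 : ℝ) • y := by
  refine e3_ext ?_ ?_ ?_ <;>
  · rw [PiLp.smul_apply, smul_eq_mul]
    simp only [Lm, m3_0, m3_1, m3_2, Rv_0, Rv_1, Rv_2, Rv_3]
    ring

def dl (a b : Fin 4) : Fin 4 → ℝ := fun k =>
  (if k = a then (1 : ℝ) else 0) - (if k = b then 1 else 0)

lemma dl_sum {a b : Fin 4} (hab : a ≠ b) : dl a b 0 + dl a b 1 + dl a b 2 + dl a b 3 = 0 := by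
  fin_cases a <;> fin_cases b <;> simp_all [dl]

noncomputable def f12 : Fin 12 → E3 :=
  ![m3 0 2 2, m3 2 0 2, m3 2 2 0, m3 2 (-2) 0, m3 2 0 (-2), m3 0 2 (-2),
    m3 0 (-2) (-2), m3 (-2) 0 (-2), m3 (-2) (-2) 0, m3 (-2) 2 0, m3 (-2) 0 2, m3 0 (-2) 2]

lemma norm_f12 (i : Fin 12) : ‖f12 i‖ = Real.sqrt 8 := by
  fin_cases i
  · show ‖m3 0 2 2‖ = Real.sqrt 8
    rw [norm_m3]; norm_num
  · show ‖m3 2 0 2‖ = Real.sqrt 8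
    rw [norm_m3]; norm_num
  · show ‖m3 2 2 0‖ = Real.sqrt 8
    rw [norm_m3]; norm_num
  · show ‖m3 2 (-2) 0‖ = Real.sqrt 8
    rw [norm_m3]; norm_num
  · show ‖m3 2 0 (-2)‖ = Real.sqrt 8
    rw [norm_m3]; norm_num
  · show ‖m3 0 2 (-2)‖ = Real.sqrt 8
    rw [norm_m3]; norm_num
  · show ‖m3 0 (-2) (-2)‖ = Real.sqrt 8
    rw [norm_m3]; norm_num
  · show ‖m3 (-2) 0 (-2)‖ = Real.sqrt 8
    rw [norm_m3]; norm_num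
  · show ‖m3 (-2) (-2) 0‖ = Real.sqrt 8
    rw [norm_m3]; norm_num
  · show ‖m3 (-2) 2 0‖ = Real.sqrt 8
    rw [norm_m3]; norm_num
  · show ‖m3 (-2) 0 2‖ = Real.sqrt 8
    rw [norm_m3]; norm_num
  · show ‖m3 0 (-2) 2‖ = Real.sqrt 8
    rw [norm_m3]; norm_num

lemma f12_neg (i : Fin 12) : ∃ j : Fin 12, f12 j = -f12 i := by
  fin_cases i
  · exact ⟨6, e3_ext (by show (0:ℝ) = -(0:ℝ); norm_num) (by show ((-2):ℝ) = -(2:ℝ); norm_num) (by show ((-2):ℝ) = -(2:ℝ); norm_num)⟩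
  · exact ⟨7, e3_ext (by show ((-2):ℝ) = -(2:ℝ); norm_num) (by show (0:ℝ) = -(0:ℝ); norm_num) (by show ((-2):ℝ) = -(2:ℝ); norm_num)⟩
  · exact ⟨8, e3_ext (by show ((-2):ℝ) = -(2:ℝ); norm_num) (by show ((-2):ℝ) = -(2:ℝ); norm_num) (by show (0:ℝ) = -(0:ℝ); norm_num)⟩
  · exact ⟨9, e3_ext (by show ((-2):ℝ) = -(2:ℝ); norm_num) (by show (2:ℝ) = -((-2):ℝ); norm_num) (by show (0:ℝ) = -(0:ℝ); norm_num)⟩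
  · exact ⟨10, e3_ext (by show ((-2):ℝ) = -(2:ℝ); norm_num) (by show (0:ℝ) = -(0:ℝ); norm_num) (by show (2:ℝ) = -((-2):ℝ); norm_num)⟩
  · exact ⟨11, e3_ext (by show (0:ℝ) = -(0:ℝ); norm_num) (by show ((-2):ℝ) = -(2:ℝ); norm_num) (by show (2:ℝ) = -((-2):ℝ); norm_num)⟩
  · exact ⟨0, e3_ext (by show (0:ℝ) = -(0:ℝ); norm_num) (by show (2:ℝ) = -((-2):ℝ); norm_num) (by show (2:ℝ) = -((-2):ℝ); norm_num)⟩
  · exact ⟨1, e3_ext (by show (2:ℝ) = -((-2):ℝ); norm_num) (by show (0:ℝ) = -(0:ℝ); norm_num) (by show (2:ℝ) = -((-2):ℝ); norm_num)⟩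
  · exact ⟨2, e3_ext (by show (2:ℝ) = -((-2):ℝ); norm_num) (by show (2:ℝ) = -((-2):ℝ); norm_num) (by show (0:ℝ) = -(0:ℝ); norm_num)⟩
  · exact ⟨3, e3_ext (by show (2:ℝ) = -((-2):ℝ); norm_num) (by show ((-2):ℝ) = -(2:ℝ); norm_num) (by show (0:ℝ) = -(0:ℝ); norm_num)⟩
  · exact ⟨4, e3_ext (by show (2:ℝ) = -((-2):ℝ); norm_num) (by show (0:ℝ) = -(0:ℝ); norm_num) (by show ((-2):ℝ) = -(2:ℝ); norm_num)⟩
  · exact ⟨5, e3_ext (by show (0:ℝ) = -(0:ℝ); norm_num) (by show (2:ℝ) = -((-2):ℝ); norm_num) (by show ((-2):ℝ) = -(2:ℝ); norm_num)⟩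

def keyZ : Fin 12 → ℤ := ![22, 202, 220, 180, 198, 18, -22, -202, -220, -180, -198, -18]

lemma f12_inj : Function.Injective f12 := by
  have hkey : ∀ i : Fin 12, 100 * f12 i 0 + 10 * f12 i 1 + f12 i 2 = (keyZ i : ℝ) := by
    intro i
    fin_cases i
    · show 100 * (0:ℝ) + 10 * (2:ℝ) + (2:ℝ) = ((22:ℤ):ℝ); norm_num
    · show 100 * (2:ℝ) + 10 * (0:ℝ) + (2:ℝ) = ((202:ℤ):ℝ); norm_num
    · show 100 * (2:ℝ) + 10 * (2:ℝ) + (0:ℝ) = ((220:ℤ):ℝ); norm_num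
    · show 100 * (2:ℝ) + 10 * ((-2):ℝ) + (0:ℝ) = ((180:ℤ):ℝ); norm_num
    · show 100 * (2:ℝ) + 10 * (0:ℝ) + ((-2):ℝ) = ((198:ℤ):ℝ); norm_num
    · show 100 * (0:ℝ) + 10 * (2:ℝ) + ((-2):ℝ) = ((18:ℤ):ℝ); norm_num
    · show 100 * (0:ℝ) + 10 * ((-2):ℝ) + ((-2):ℝ) = (((-22):ℤ):ℝ); norm_num
    · show 100 * ((-2):ℝ) + 10 * (0:ℝ) + ((-2):ℝ) = (((-202):ℤ):ℝ); norm_num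
    · show 100 * ((-2):ℝ) + 10 * ((-2):ℝ) + (0:ℝ) = (((-220):ℤ):ℝ); norm_num
    · show 100 * ((-2):ℝ) + 10 * (2:ℝ) + (0:ℝ) = (((-180):ℤ):ℝ); norm_num
    · show 100 * ((-2):ℝ) + 10 * (0:ℝ) + (2:ℝ) = (((-198):ℤ):ℝ); norm_num
    · show 100 * (0:ℝ) + 10 * ((-2):ℝ) + (2:ℝ) = (((-18):ℤ):ℝ); norm_num
  have hZ : Function.Injective keyZ := by decide
  intro i j h
  apply hZ
  have : (keyZ i : ℝ) = (keyZ j : ℝ) := by rw [← hkey i, ← hkey j, h]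
  exact_mod_cast this

lemma fin4v0 : (0 : Fin 4).val = 0 := rfl
lemma fin4v1 : (1 : Fin 4).val = 1 := rfl
lemma fin4v2 : (2 : Fin 4).val = 2 := rfl
lemma fin4v3 : (3 : Fin 4).val = 3 := rfl

lemma lmdl_0 : f12 0 = Lm (dl 0 1) := (e3_ext (by show _ = (0:ℝ); norm_num [Lm, m3_0, m3_1, m3_2, dl, Fin.ext_iff, fin4v0, fin4v1, fin4v2, fin4v3]) (by show _ = (2:ℝ); norm_num [Lm, m3_0, m3_1, m3_2, dl, Fin.ext_iff, fin4v0, fin4v1, fin4v2, fin4v3]) (by show _ = (2:ℝ); norm_num [Lm, m3_0, m3_1, m3_2, dl, Fin.ext_iff, fin4v0, fin4v1, fin4v2, fin4v3])).symm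
lemma lmdl_1 : f12 1 = Lm (dl 0 2) := (e3_ext (by show _ = (2:ℝ); norm_num [Lm, m3_0, m3_1, m3_2, dl, Fin.ext_iff, fin4v0, fin4v1, fin4v2, fin4v3]) (by show _ = (0:ℝ); norm_num [Lm, m3_0, m3_1, m3_2, dl, Fin.ext_iff, fin4v0, fin4v1, fin4v2, fin4v3]) (by show _ = (2:ℝ); norm_num [Lm, m3_0, m3_1, m3_2, dl, Fin.ext_iff, fin4v0, fin4v1, fin4v2, fin4v3])).symm
lemma lmdl_2 : f12 2 = Lm (dl 0 3) := (e3_ext (by show _ = (2:ℝ); norm_num [Lm, m3_0, m3_1, m3_2, dl, Fin.ext_iff, fin4v0, fin4v1, fin4v2, fin4v3]) (by show _ = (2:ℝ); norm_num [Lm, m3_0, m3_1, m3_2, dl, Fin.ext_iff, fin4v0, fin4v1, fin4v2, fin4v3]) (by show _ = (0:ℝ); norm_num [Lm, m3_0, m3_1, m3_2, dl, Fin.ext_iff, fin4v0, fin4v1, fin4v2, fin4v3])).symm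
lemma lmdl_3 : f12 3 = Lm (dl 1 2) := (e3_ext (by show _ = (2:ℝ); norm_num [Lm, m3_0, m3_1, m3_2, dl, Fin.ext_iff, fin4v0, fin4v1, fin4v2, fin4v3]) (by show _ = ((-2):ℝ); norm_num [Lm, m3_0, m3_1, m3_2, dl, Fin.ext_iff, fin4v0, fin4v1, fin4v2, fin4v3]) (by show _ = (0:ℝ); norm_num [Lm, m3_0, m3_1, m3_2, dl, Fin.ext_iff, fin4v0, fin4v1, fin4v2, fin4v3])).symm
lemma lmdl_4 : f12 4 = Lm (dl 1 3) := (e3_ext (by show _ = (2:ℝ); norm_num [Lm, m3_0, m3_1, m3_2, dl, Fin.ext_iff, fin4v0, fin4v1, fin4v2, fin4v3]) (by show _ = (0:ℝ); norm_num [Lm, m3_0, m3_1, m3_2, dl, Fin.ext_iff, fin4v0, fin4v1, fin4v2, fin4v3]) (by show _ = ((-2):ℝ); norm_num [Lm, m3_0, m3_1, m3_2, dl, Fin.ext_iff, fin4v0, fin4v1, fin4v2, fin4v3])).symm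
lemma lmdl_5 : f12 5 = Lm (dl 2 3) := (e3_ext (by show _ = (0:ℝ); norm_num [Lm, m3_0, m3_1, m3_2, dl, Fin.ext_iff, fin4v0, fin4v1, fin4v2, fin4v3]) (by show _ = (2:ℝ); norm_num [Lm, m3_0, m3_1, m3_2, dl, Fin.ext_iff, fin4v0, fin4v1, fin4v2, fin4v3]) (by show _ = ((-2):ℝ); norm_num [Lm, m3_0, m3_1, m3_2, dl, Fin.ext_iff, fin4v0, fin4v1, fin4v2, fin4v3])).symm
lemma lmdl_6 : f12 6 = Lm (dl 1 0) := (e3_ext (by show _ = (0:ℝ); norm_num [Lm, m3_0, m3_1, m3_2, dl, Fin.ext_iff, fin4v0, fin4v1, fin4v2, fin4v3]) (by show _ = ((-2):ℝ); norm_num [Lm, m3_0, m3_1, m3_2, dl, Fin.ext_iff, fin4v0, fin4v1, fin4v2, fin4v3]) (by show _ = ((-2):ℝ); norm_num [Lm, m3_0, m3_1, m3_2, dl, Fin.ext_iff, fin4v0, fin4v1, fin4v2, fin4v3])).symm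
lemma lmdl_7 : f12 7 = Lm (dl 2 0) := (e3_ext (by show _ = ((-2):ℝ); norm_num [Lm, m3_0, m3_1, m3_2, dl, Fin.ext_iff, fin4v0, fin4v1, fin4v2, fin4v3]) (by show _ = (0:ℝ); norm_num [Lm, m3_0, m3_1, m3_2, dl, Fin.ext_iff, fin4v0, fin4v1, fin4v2, fin4v3]) (by show _ = ((-2):ℝ); norm_num [Lm, m3_0, m3_1, m3_2, dl, Fin.ext_iff, fin4v0, fin4v1, fin4v2, fin4v3])).symm
lemma lmdl_8 : f12 8 = Lm (dl 3 0) := (e3_ext (by show _ = ((-2):ℝ); norm_num [Lm, m3_0, m3_1, m3_2, dl, Fin.ext_iff, fin4v0, fin4v1, fin4v2, fin4v3]) (by show _ = ((-2):ℝ); norm_num [Lm, m3_0, m3_1, m3_2, dl, Fin.ext_iff, fin4v0, fin4v1, fin4v2, fin4v3]) (by show _ = (0:ℝ); norm_num [Lm, m3_0, m3_1, m3_2, dl, Fin.ext_iff, fin4v0, fin4v1, fin4v2, fin4v3])).symm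
lemma lmdl_9 : f12 9 = Lm (dl 2 1) := (e3_ext (by show _ = ((-2):ℝ); norm_num [Lm, m3_0, m3_1, m3_2, dl, Fin.ext_iff, fin4v0, fin4v1, fin4v2, fin4v3]) (by show _ = (2:ℝ); norm_num [Lm, m3_0, m3_1, m3_2, dl, Fin.ext_iff, fin4v0, fin4v1, fin4v2, fin4v3]) (by show _ = (0:ℝ); norm_num [Lm, m3_0, m3_1, m3_2, dl, Fin.ext_iff, fin4v0, fin4v1, fin4v2, fin4v3])).symm
lemma lmdl_10 : f12 10 = Lm (dl 3 1) := (e3_ext (by show _ = ((-2):ℝ); norm_num [Lm, m3_0, m3_1, m3_2, dl, Fin.ext_iff, fin4v0, fin4v1, fin4v2, fin4v3]) (by show _ = (0:ℝ); norm_num [Lm, m3_0, m3_1, m3_2, dl, Fin.ext_iff, fin4v0, fin4v1, fin4v2, fin4v3]) (by show _ = (2:ℝ); norm_num [Lm, m3_0, m3_1, m3_2, dl, Fin.ext_iff, fin4v0, fin4v1, fin4v2, fin4v3])).symm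
lemma lmdl_11 : f12 11 = Lm (dl 3 2) := (e3_ext (by show _ = (0:ℝ); norm_num [Lm, m3_0, m3_1, m3_2, dl, Fin.ext_iff, fin4v0, fin4v1, fin4v2, fin4v3]) (by show _ = ((-2):ℝ); norm_num [Lm, m3_0, m3_1, m3_2, dl, Fin.ext_iff, fin4v0, fin4v1, fin4v2, fin4v3]) (by show _ = (2:ℝ); norm_num [Lm, m3_0, m3_1, m3_2, dl, Fin.ext_iff, fin4v0, fin4v1, fin4v2, fin4v3])).symm

lemma dl_f12 : ∀ i : Fin 12, ∃ a b : Fin 4, a ≠ b ∧ f12 i = Lm (dl a b) := by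
  intro i
  fin_cases i
  · exact ⟨0, 1, by decide, lmdl_0⟩
  · exact ⟨0, 2, by decide, lmdl_1⟩
  · exact ⟨0, 3, by decide, lmdl_2⟩
  · exact ⟨1, 2, by decide, lmdl_3⟩
  · exact ⟨1, 3, by decide, lmdl_4⟩
  · exact ⟨2, 3, by decide, lmdl_5⟩
  · exact ⟨1, 0, by decide, lmdl_6⟩
  · exact ⟨2, 0, by decide, lmdl_7⟩
  · exact ⟨3, 0, by decide, lmdl_8⟩
  · exact ⟨2, 1, by decide, lmdl_9⟩
  · exact ⟨3, 1, by decide, lmdl_10⟩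
  · exact ⟨3, 2, by decide, lmdl_11⟩

lemma f12_dl : ∀ a b : Fin 4, a ≠ b → ∃ i : Fin 12, f12 i = Lm (dl a b) := by
  intro a b hab
  fin_cases a <;> fin_cases b
  · exact absurd rfl hab
  · exact ⟨0, lmdl_0⟩
  · exact ⟨1, lmdl_1⟩
  · exact ⟨2, lmdl_2⟩
  · exact ⟨6, lmdl_6⟩
  · exact absurd rfl hab
  · exact ⟨3, lmdl_3⟩
  · exact ⟨4, lmdl_4⟩
  · exact ⟨7, lmdl_7⟩
  · exact ⟨9, lmdl_9⟩
  · exact absurd rfl hab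
  · exact ⟨5, lmdl_5⟩
  · exact ⟨8, lmdl_8⟩
  · exact ⟨10, lmdl_10⟩
  · exact ⟨11, lmdl_11⟩
  · exact absurd rfl hab

noncomputable def VV : Set E3 := (fun w => (Real.sqrt 8)⁻¹ • w) '' (Set.range f12)

lemma sqrt8_pos : 0 < Real.sqrt 8 := Real.sqrt_pos.mpr (by norm_num)

lemma VV_subset : VV ⊆ Metric.sphere 0 1 := by
  rintro x ⟨w, ⟨i, rfl⟩, rfl⟩
  rw [mem_sphere_zero_iff_norm, norm_smul, norm_f12, Real.norm_eq_abs, abs_inv,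
    abs_of_pos sqrt8_pos, inv_mul_cancel₀ sqrt8_pos.ne']

lemma VV_ncard : VV.ncard = 12 := by
  unfold VV
  rw [Set.ncard_image_of_injective _ (smul_right_injective E3 (inv_ne_zero sqrt8_pos.ne')),
    ← Set.image_univ, Set.ncard_image_of_injective _ f12_inj, Set.ncard_univ]
  simp [Nat.card_eq_fintype_card]

noncomputable def phi (p : SpanConf4) : E3 := ‖Lm (wt p.1)‖⁻¹ • Lm (wt p.1)

lemma Lm_wt_ne (p : SpanConf4) : Lm (wt p.1) ≠ 0 :=
  fun h => wt_conf_ne_zero p (Lm_eq_zero (wt_sum p.1) h)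

lemma phi_norm (p : SpanConf4) : ‖phi p‖ = 1 := by
  unfold phi
  rw [norm_smul, Real.norm_eq_abs, abs_inv, abs_norm,
    inv_mul_cancel₀ (norm_ne_zero_iff.mpr (Lm_wt_ne p))]

lemma normalize_smul_pos {c : ℝ} (hc : 0 < c) (v : E3) :
    ‖c • v‖⁻¹ • (c • v) = ‖v‖⁻¹ • v := by
  by_cases hv : v = 0
  · simp [hv]
  · rw [norm_smul, Real.norm_eq_abs, abs_of_pos hc, smul_smul, mul_inv, mul_right_comm,
      inv_mul_cancel₀ hc.ne', one_mul]

lemma phi_rel {p q : SpanConf4} (h : affRel4 p q) : phi p = phi q := by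
  obtain ⟨g, hg⟩ := h
  have hq : q.1 = fun i => g.app (p.1 i) := funext fun i => (hg i).symm
  have hw : wt q.1 = g.A.det • wt p.1 := by
    rw [hq, wt_map]
    funext k
    simp [Pi.smul_apply]
  unfold phi
  rw [hw, Lm_smul, normalize_smul_pos g.det_pos]

lemma phi_notin (p : SpanConf4) : phi p ∉ VV := by
  rintro ⟨w, ⟨i, rfl⟩, heq⟩
  obtain ⟨a, b, hab, hfi⟩ := dl_f12 i
  have hu0 : Lm (wt p.1) ≠ 0 := Lm_wt_ne p
  have hn0 : ‖Lm (wt p.1)‖ ≠ 0 := norm_ne_zero_iff.mpr hu0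
  have heq2 : (Real.sqrt 8)⁻¹ • f12 i = ‖Lm (wt p.1)‖⁻¹ • Lm (wt p.1) := heq
  have h1 : Lm (wt p.1) = (‖Lm (wt p.1)‖ * (Real.sqrt 8)⁻¹) • Lm (dl a b) := by
    calc Lm (wt p.1) = ‖Lm (wt p.1)‖ • (‖Lm (wt p.1)‖⁻¹ • Lm (wt p.1)) := by
          rw [smul_smul, mul_inv_cancel₀ hn0, one_smul]
    _ = ‖Lm (wt p.1)‖ • ((Real.sqrt 8)⁻¹ • f12 i) := by rw [heq2]
    _ = (‖Lm (wt p.1)‖ * (Real.sqrt 8)⁻¹) • f12 i := by rw [smul_smul]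
    _ = (‖Lm (wt p.1)‖ * (Real.sqrt 8)⁻¹) • Lm (dl a b) := by rw [hfi]
  set c' := ‖Lm (wt p.1)‖ * (Real.sqrt 8)⁻¹ with hc'
  have hcne : c' ≠ 0 := mul_ne_zero hn0 (inv_ne_zero sqrt8_pos.ne')
  have hwt : wt p.1 = c' • dl a b := by
    refine Lm_inj_sum0 (wt_sum p.1) ?_ ?_
    · simp only [Pi.smul_apply, smul_eq_mul]
      linear_combination c' * (dl_sum hab)
    · rw [Lm_smul]
      exact h1
  have hcmb := wt_combo' p.1
  rw [hwt] at hcmb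
  have hsum : ∑ k, (c' • dl a b) k • p.1 k = c' • (p.1 a - p.1 b) := by
    simp only [Pi.smul_apply, dl, smul_eq_mul, mul_sub, sub_smul, mul_ite, mul_one, mul_zero,
      ite_smul, zero_smul, Finset.sum_sub_distrib, Finset.sum_ite_eq' Finset.univ,
      if_pos (Finset.mem_univ _), smul_sub]
  rw [hsum] at hcmb
  rcases smul_eq_zero.mp hcmb with h' | h'
  · exact hcne h'
  · exact hab (p.2.1 (sub_eq_zero.mp h'))

lemma Lm_zero : Lm (0 : Fin 4 → ℝ) = 0 :=
  e3_ext (by show (0:ℝ) + 0 - 0 - 0 = 0; norm_num) (by show (0:ℝ) - 0 + 0 - 0 = 0; norm_num)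
    (by show (0:ℝ) - 0 - 0 + 0 = 0; norm_num)

lemma notpar_of_mem {x : E3} (hx1 : ‖x‖ = 1) (hxV : x ∉ VV) : NotPar (Rv x) := by
  intro a b hab
  by_contra hcon
  push_neg at hcon
  have hab0 : Rv x a + Rv x b = 0 := by
    have hs := Rv_sum x
    fin_cases a <;> fin_cases b
    · exact absurd rfl hab
    · have h1 := hcon 2 (by decide) (by decide)
      have h2 := hcon 3 (by decide) (by decide)
      show Rv x 0 + Rv x 1 = 0
      linarith
    · have h1 := hcon 1 (by decide) (by decide)
      have h2 := hcon 3 (by decide) (by decide)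
      show Rv x 0 + Rv x 2 = 0
      linarith
    · have h1 := hcon 1 (by decide) (by decide)
      have h2 := hcon 2 (by decide) (by decide)
      show Rv x 0 + Rv x 3 = 0
      linarith
    · have h1 := hcon 2 (by decide) (by decide)
      have h2 := hcon 3 (by decide) (by decide)
      show Rv x 1 + Rv x 0 = 0
      linarith
    · exact absurd rfl hab
    · have h1 := hcon 0 (by decide) (by decide)
      have h2 := hcon 3 (by decide) (by decide)
      show Rv x 1 + Rv x 2 = 0
      linarith
    · have h1 := hcon 0 (by decide) (by decide)
      have h2 := hcon 2 (by decide) (by decide)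
      show Rv x 1 + Rv x 3 = 0
      linarith
    · have h1 := hcon 1 (by decide) (by decide)
      have h2 := hcon 3 (by decide) (by decide)
      show Rv x 2 + Rv x 0 = 0
      linarith
    · have h1 := hcon 0 (by decide) (by decide)
      have h2 := hcon 3 (by decide) (by decide)
      show Rv x 2 + Rv x 1 = 0
      linarith
    · exact absurd rfl hab
    · have h1 := hcon 0 (by decide) (by decide)
      have h2 := hcon 1 (by decide) (by decide)
      show Rv x 2 + Rv x 3 = 0
      linarith
    · have h1 := hcon 1 (by decide) (by decide)
      have h2 := hcon 2 (by decide) (by decide)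
      show Rv x 3 + Rv x 0 = 0
      linarith
    · have h1 := hcon 0 (by decide) (by decide)
      have h2 := hcon 2 (by decide) (by decide)
      show Rv x 3 + Rv x 1 = 0
      linarith
    · have h1 := hcon 0 (by decide) (by decide)
      have h2 := hcon 1 (by decide) (by decide)
      show Rv x 3 + Rv x 2 = 0
      linarith
    · exact absurd rfl hab
  set c := Rv x a with hc
  have hRv : Rv x = c • dl a b := by
    funext k
    by_cases hk1 : k = a
    · subst hk1
      simp [dl, Pi.smul_apply, if_pos rfl, if_neg hab, hc]
    · by_cases hk2 : k = b
      · subst hk2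
        have hba : k ≠ a := hk1
        simp [dl, Pi.smul_apply, hba]
        linarith
      · simp [dl, hk1, hk2, hcon k hk1 hk2]
  have hc0 : c ≠ 0 := by
    intro h0
    have hz : Rv x = 0 := by rw [hRv, h0, zero_smul]
    have h4 : (4:ℝ) • x = 0 := by rw [← Lm_Rv, hz, Lm_zero]
    rcases smul_eq_zero.mp h4 with h' | h'
    · norm_num at h'
    · rw [h'] at hx1; simp at hx1
  obtain ⟨i, hi⟩ := f12_dl a b hab
  have hx4 : (4:ℝ) • x = c • f12 i := by rw [← Lm_Rv, hRv, Lm_smul, hi]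
  have hxe : x = (c / 4) • f12 i := by
    have h4 : x = (4:ℝ)⁻¹ • ((4:ℝ) • x) := by rw [smul_smul]; norm_num
    rw [h4, hx4, smul_smul]
    congr 1
    ring
  have hnorm : |c / 4| * Real.sqrt 8 = 1 := by
    rw [← hx1, hxe, norm_smul, Real.norm_eq_abs, norm_f12]
  have habs : |c / 4| = (Real.sqrt 8)⁻¹ := by
    rw [show (Real.sqrt 8)⁻¹ = 1 / Real.sqrt 8 by rw [one_div], eq_div_iff sqrt8_pos.ne']
    exact hnorm
  rcases (abs_eq (le_of_lt (inv_pos.mpr sqrt8_pos))).mp habs with hcv | hcv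
  · refine hxV ⟨f12 i, ⟨i, rfl⟩, ?_⟩
    show (Real.sqrt 8)⁻¹ • f12 i = x
    rw [← hcv, ← hxe]
  · obtain ⟨j, hj⟩ := f12_neg i
    refine hxV ⟨f12 j, ⟨j, rfl⟩, ?_⟩
    show (Real.sqrt 8)⁻¹ • f12 j = x
    rw [hj, smul_neg, hxe, hcv, neg_smul]

lemma phi_sec (x : E3) (hx1 : ‖x‖ = 1) {l : Fin 4} (hl : Rv x l ≠ 0) {σ : ℝ}
    (hσ : σ = 1 ∨ σ = -1) (hsign : 0 < σ * (par l * Rv x l))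
    (hmem : Function.Injective (sec l σ (Rv x)) ∧
      affineSpan ℝ (Set.range (sec l σ (Rv x))) = ⊤) :
    phi ⟨sec l σ (Rv x), hmem⟩ = x := by
  have hker := wt_sec hσ hl (Rv_sum x)
  set c := wt (sec l σ (Rv x)) l / Rv x l with hcdef
  have hwl := wt_sec_l l σ (Rv x)
  have hcpos : 0 < c := by
    rw [hcdef, hwl]
    fin_cases l
    · have hs : 0 < σ * (1 * Rv x 0) := hsign
      show 0 < 2 * σ / Rv x 0
      rcases mul_pos_iff.mp hs with ⟨h1, h2⟩ | ⟨h1, h2⟩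
      · apply div_pos <;> nlinarith
      · apply div_pos_of_neg_of_neg <;> nlinarith
    · have hs : 0 < σ * (-1 * Rv x 1) := hsign
      show 0 < -6 * σ / Rv x 1
      rcases mul_pos_iff.mp hs with ⟨h1, h2⟩ | ⟨h1, h2⟩
      · apply div_pos_of_neg_of_neg <;> nlinarith
      · apply div_pos <;> nlinarith
    · have hs : 0 < σ * (1 * Rv x 2) := hsign
      show 0 < 6 * σ / Rv x 2
      rcases mul_pos_iff.mp hs with ⟨h1, h2⟩ | ⟨h1, h2⟩
      · apply div_pos <;> nlinarith
      · apply div_pos_of_neg_of_neg <;> nlinarith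
    · have hs : 0 < σ * (-1 * Rv x 3) := hsign
      show 0 < -2 * σ / Rv x 3
      rcases mul_pos_iff.mp hs with ⟨h1, h2⟩ | ⟨h1, h2⟩
      · apply div_pos_of_neg_of_neg <;> nlinarith
      · apply div_pos <;> nlinarith
  have hLm : Lm (wt (sec l σ (Rv x))) = (4 * c) • x := by
    rw [hker, Lm_smul, Lm_Rv, smul_smul]
    congr 1
    ring
  show ‖Lm (wt (sec l σ (Rv x)))‖⁻¹ • Lm (wt (sec l σ (Rv x))) = x
  rw [hLm, norm_smul, Real.norm_eq_abs, abs_of_pos (by linarith : (0:ℝ) < 4 * c), hx1,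
    mul_one, smul_smul, inv_mul_cancel₀ (by linarith : (4 * c : ℝ) ≠ 0), one_smul]

lemma Sf_smul (σ c : ℝ) (lam : Fin 4 → ℝ) : Sf σ (c • lam) = c • Sf σ lam := by
  funext xx
  simp only [Sf, Pi.smul_apply, smul_eq_mul]
  ring

lemma sec_smul (l : Fin 4) (σ : ℝ) {lam : Fin 4 → ℝ} {c : ℝ} (hc : c ≠ 0) (hl : lam l ≠ 0) :
    sec l σ (c • lam) = sec l σ lam := by
  funext m
  unfold sec
  by_cases hm : m = l
  · subst hm
    rw [if_pos rfl, if_pos rfl, Sf_smul]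
    congr 1
    rw [Pi.smul_apply, smul_eq_mul, smul_smul, mul_inv, mul_right_comm,
      inv_mul_cancel₀ hc, one_mul]
  · rw [if_neg hm, if_neg hm]

lemma phi_inj (p q : SpanConf4) (h : phi p = phi q) :
    Quot.mk affRel4 p = Quot.mk affRel4 q := by
  have hup : Lm (wt p.1) ≠ 0 := Lm_wt_ne p
  have huq : Lm (wt q.1) ≠ 0 := Lm_wt_ne q
  have hnp : ‖Lm (wt p.1)‖ ≠ 0 := norm_ne_zero_iff.mpr hup
  have hnq : ‖Lm (wt q.1)‖ ≠ 0 := norm_ne_zero_iff.mpr huq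
  have h' : ‖Lm (wt p.1)‖⁻¹ • Lm (wt p.1) = ‖Lm (wt q.1)‖⁻¹ • Lm (wt q.1) := h
  set c := ‖Lm (wt p.1)‖ / ‖Lm (wt q.1)‖ with hcdef
  have hcpos : 0 < c := div_pos (norm_pos_iff.mpr hup) (norm_pos_iff.mpr huq)
  have hL : Lm (wt p.1) = c • Lm (wt q.1) := by
    calc Lm (wt p.1) = ‖Lm (wt p.1)‖ • (‖Lm (wt p.1)‖⁻¹ • Lm (wt p.1)) := by
          rw [smul_smul, mul_inv_cancel₀ hnp, one_smul]
    _ = ‖Lm (wt p.1)‖ • (‖Lm (wt q.1)‖⁻¹ • Lm (wt q.1)) := by rw [h']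
    _ = c • Lm (wt q.1) := by rw [smul_smul, hcdef, div_eq_mul_inv]
  have hwt : wt p.1 = c • wt q.1 := by
    refine Lm_inj_sum0 (wt_sum p.1) ?_ ?_
    · simp only [Pi.smul_apply, smul_eq_mul]
      linear_combination c * wt_sum q.1
    · rw [Lm_smul]; exact hL
  obtain ⟨l, hlq⟩ := Function.ne_iff.mp (wt_conf_ne_zero q)
  have hlp : wt p.1 l ≠ 0 := by
    rw [hwt, Pi.smul_apply, smul_eq_mul]
    exact mul_ne_zero hcpos.ne' hlq
  have hsg : sg l (wt p.1) = sg l (wt q.1) := by rw [hwt, sg_smul l (wt q.1) hcpos]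
  have hsec : sec l (sg l (wt p.1)) (wt p.1) = sec l (sg l (wt q.1)) (wt q.1) := by
    rw [hsg, hwt, sec_smul l _ hcpos.ne' hlq]
  have hmp := sec_mem (sg_pm l (wt p.1)) hlp (wt_sum p.1) (notpar_conf p)
  have hmq := sec_mem (sg_pm l (wt q.1)) hlq (wt_sum q.1) (notpar_conf q)
  have hrp := nf_spec p l hlp hmp
  have hrq := nf_spec q l hlq hmq
  have heq : (⟨sec l (sg l (wt p.1)) (wt p.1), hmp⟩ : SpanConf4)
      = ⟨sec l (sg l (wt q.1)) (wt q.1), hmq⟩ := Subtype.ext hsec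
  calc Quot.mk affRel4 p = Quot.mk affRel4 ⟨sec l (sg l (wt p.1)) (wt p.1), hmp⟩ :=
        (Quot.sound hrp).symm
  _ = Quot.mk affRel4 ⟨sec l (sg l (wt q.1)) (wt q.1), hmq⟩ := by rw [heq]
  _ = Quot.mk affRel4 q := Quot.sound hrq

lemma cont_coord (i : Fin 4) (j : Fin 2) : Continuous fun p : SpanConf4 => p.1 i j :=
  (continuous_apply j).comp ((continuous_apply i).comp continuous_subtype_val)

lemma cont_dd (a b c : Fin 4) : Continuous fun p : SpanConf4 => dd (p.1 a) (p.1 b) (p.1 c) := by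
  simp only [dd]
  exact (((cont_coord b 0).sub (cont_coord a 0)).mul
      ((cont_coord c 1).sub (cont_coord a 1))).sub
    (((cont_coord c 0).sub (cont_coord a 0)).mul ((cont_coord b 1).sub (cont_coord a 1)))

lemma cont_wt (k : Fin 4) : Continuous fun p : SpanConf4 => wt p.1 k := by
  fin_cases k
  · exact cont_dd 1 2 3
  · exact (cont_dd 0 2 3).neg
  · exact cont_dd 0 1 3
  · exact (cont_dd 0 1 2).neg

lemma cont_Lm_wt : Continuous fun p : SpanConf4 => Lm (wt p.1) := by
  have hf : Continuous fun p : SpanConf4 =>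
      (![wt p.1 0 + wt p.1 1 - wt p.1 2 - wt p.1 3,
         wt p.1 0 - wt p.1 1 + wt p.1 2 - wt p.1 3,
         wt p.1 0 - wt p.1 1 - wt p.1 2 + wt p.1 3] : Fin 3 → ℝ) := by
    refine continuous_pi fun i => ?_
    fin_cases i
    · exact (((cont_wt 0).add (cont_wt 1)).sub (cont_wt 2)).sub (cont_wt 3)
    · exact (((cont_wt 0).sub (cont_wt 1)).add (cont_wt 2)).sub (cont_wt 3)
    · exact (((cont_wt 0).sub (cont_wt 1)).sub (cont_wt 2)).add (cont_wt 3)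
  exact (PiLp.continuous_toLp 2 (fun _ : Fin 3 => ℝ)).comp hf

lemma cont_phi : Continuous phi := by
  have h1 := cont_Lm_wt
  exact ((h1.norm).inv₀ (fun p => norm_ne_zero_iff.mpr (Lm_wt_ne p))).smul h1

lemma cont_E3coord (i : Fin 3) : Continuous fun y : E3 => y i :=
  (continuous_apply i).comp (PiLp.continuous_ofLp 2 (fun _ : Fin 3 => ℝ))

lemma cont_Rv (k : Fin 4) : Continuous fun y : E3 => Rv y k := by
  fin_cases k
  · exact ((cont_E3coord 0).add (cont_E3coord 1)).add (cont_E3coord 2)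
  · exact ((cont_E3coord 0).sub (cont_E3coord 1)).sub (cont_E3coord 2)
  · exact (((cont_E3coord 0).neg).add (cont_E3coord 1)).sub (cont_E3coord 2)
  · exact (((cont_E3coord 0).neg).sub (cont_E3coord 1)).add (cont_E3coord 2)

lemma exists_Rv_ne {x : E3} (hx : ‖x‖ = 1) : ∃ l, Rv x l ≠ 0 := by
  by_contra hcon
  push_neg at hcon
  have h4 := Lm_Rv x
  have e0 : Rv x 0 + Rv x 1 - Rv x 2 - Rv x 3 = ((4:ℝ) • x) 0 := congrArg (· 0) h4
  have e1 : Rv x 0 - Rv x 1 + Rv x 2 - Rv x 3 = ((4:ℝ) • x) 1 := congrArg (· 1) h4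
  have e2 : Rv x 0 - Rv x 1 - Rv x 2 + Rv x 3 = ((4:ℝ) • x) 2 := congrArg (· 2) h4
  have e0' : Rv x 0 + Rv x 1 - Rv x 2 - Rv x 3 = 4 * x 0 := e0
  have e1' : Rv x 0 - Rv x 1 + Rv x 2 - Rv x 3 = 4 * x 1 := e1
  have e2' : Rv x 0 - Rv x 1 - Rv x 2 + Rv x 3 = 4 * x 2 := e2
  have hx0 : x = 0 := by
    apply PiLp.ext; intro i
    fin_cases i
    · show x 0 = 0
      have := hcon 0; have := hcon 1; have := hcon 2; have := hcon 3; linarith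
    · show x 1 = 0
      have := hcon 0; have := hcon 1; have := hcon 2; have := hcon 3; linarith
    · show x 2 = 0
      have := hcon 0; have := hcon 1; have := hcon 2; have := hcon 3; linarith
  rw [hx0] at hx
  simp at hx

noncomputable def Phi0 : AffConf4 → E3 := Quot.lift phi (fun _ _ h => phi_rel h)

lemma Phi0_mem (a : AffConf4) : Phi0 a ∈ Sphere2 \ VV := by
  induction a using Quot.ind with
  | _ p => exact ⟨mem_sphere_zero_iff_norm.mpr (phi_norm p), phi_notin p⟩

noncomputable def PhiT : AffConf4 → ↥(Sphere2 \ VV) := fun a => ⟨Phi0 a, Phi0_mem a⟩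

lemma PhiT_cont : Continuous PhiT :=
  Continuous.subtype_mk (continuous_quot_lift _ cont_phi) _

lemma PhiT_bij : Function.Bijective PhiT := by
  constructor
  · intro a b
    induction a using Quot.ind with
    | _ p =>
    induction b using Quot.ind with
    | _ q =>
    intro h
    exact phi_inj p q (congrArg Subtype.val h)
  · rintro ⟨y, hy⟩
    have hy1 : ‖y‖ = 1 := mem_sphere_zero_iff_norm.mp hy.1
    obtain ⟨l, hl⟩ := exists_Rv_ne hy1
    have hsign := sg_mul_pos l (Rv y) hl 1 one_pos
    rw [one_mul] at hsign
    have hmem := sec_mem (sg_pm l (Rv y)) hl (Rv_sum y) (notpar_of_mem hy1 hy.2)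
    exact ⟨Quot.mk _ ⟨sec l (sg l (Rv y)) (Rv y), hmem⟩,
      Subtype.ext (phi_sec y hy1 hl (sg_pm l (Rv y)) hsign hmem)⟩

noncomputable def eT : AffConf4 ≃ ↥(Sphere2 \ VV) := Equiv.ofBijective PhiT PhiT_bij

set_option maxHeartbeats 2000000 in
lemma eT_symm_cont : Continuous eT.symm := by
  rw [continuous_iff_continuousAt]
  intro y₀
  have hy₀1 : ‖(y₀ : ↥(Sphere2 \ VV)).1‖ = 1 := mem_sphere_zero_iff_norm.mp y₀.2.1
  obtain ⟨l, hl⟩ := exists_Rv_ne hy₀1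
  set σ0 := sg l (Rv y₀.1) with hσ0
  have hσpm : σ0 = 1 ∨ σ0 = -1 := sg_pm l (Rv y₀.1)
  set U : Set E3 := {x : E3 | 0 < σ0 * (par l * Rv x l)} with hU
  have hUopen : IsOpen U := by
    apply isOpen_lt continuous_const
    exact continuous_const.mul (continuous_const.mul (cont_Rv l))
  have hy₀U : y₀.1 ∈ U := by
    have h := sg_mul_pos l (Rv y₀.1) hl 1 one_pos
    rw [one_mul] at h
    exact h
  set W : Set ↥(Sphere2 \ VV) := Subtype.val ⁻¹' U with hW
  have hWopen : IsOpen W := hUopen.preimage continuous_subtype_val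
  have hy₀W : y₀ ∈ W := hy₀U
  refine ContinuousOn.continuousAt ?_ (hWopen.mem_nhds hy₀W)
  rw [continuousOn_iff_continuous_restrict]
  have hsignw : ∀ w : ↥W, 0 < σ0 * (par l * Rv w.1.1 l) := fun w => w.2
  have hlw : ∀ w : ↥W, Rv w.1.1 l ≠ 0 := by
    intro w h0
    have h2 := hsignw w
    rw [h0] at h2
    simp at h2
  have hwnorm : ∀ w : ↥W, ‖w.1.1‖ = 1 := fun w => mem_sphere_zero_iff_norm.mp w.1.2.1
  have hwV : ∀ w : ↥W, w.1.1 ∉ VV := fun w => w.1.2.2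
  have hmemw : ∀ w : ↥W, Function.Injective (sec l σ0 (Rv w.1.1)) ∧
      affineSpan ℝ (Set.range (sec l σ0 (Rv w.1.1))) = ⊤ :=
    fun w => sec_mem hσpm (hlw w) (Rv_sum _) (notpar_of_mem (hwnorm w) (hwV w))
  have hres : W.domRestrict eT.symm
      = fun w => Quot.mk affRel4 ⟨sec l σ0 (Rv w.1.1), hmemw w⟩ := by
    funext w
    rw [Set.domRestrict_apply, Equiv.symm_apply_eq]
    apply Subtype.ext
    exact (phi_sec w.1.1 (hwnorm w) (hlw w) hσpm (hsignw w) (hmemw w)).symm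
  rw [hres]
  refine continuous_quot_mk.comp (Continuous.subtype_mk ?_ _)
  have hcw : ∀ k : Fin 4, Continuous fun w : ↥W => Rv w.1.1 k :=
    fun k => (cont_Rv k).comp (continuous_subtype_val.comp continuous_subtype_val)
  refine continuous_pi fun m => ?_
  by_cases hm : m = l
  · subst hm
    have he : (fun w : ↥W => sec m σ0 (Rv w.1.1) m)
        = fun w => tpar σ0 m - (Rv w.1.1 m)⁻¹ • Sf σ0 (Rv w.1.1) := by
      funext w
      exact if_pos rfl
    rw [he]
    refine Continuous.sub continuous_const (Continuous.smul ((hcw m).inv₀ hlw) ?_)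
    refine continuous_pi fun j => ?_
    simp only [Sf]
    exact ((((hcw 0).mul continuous_const).add ((hcw 1).mul continuous_const)).add
      ((hcw 2).mul continuous_const)).add ((hcw 3).mul continuous_const)
  · have he : (fun w : ↥W => sec l σ0 (Rv w.1.1) m) = fun _ => tpar σ0 m := by
      funext w
      exact if_neg hm
    rw [he]
    exact continuous_const

/-- `A 4` is homeomorphic to the complement of a set of 12 points in the 2-sphere. -/
theorem affConf4_homeomorph_sphere_minus_twelve :
    ∃ V : Set (EuclideanSpace ℝ (Fin 3)), V ⊆ Sphere2 ∧ V.ncard = 12 ∧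
      Nonempty (AffConf4 ≃ₜ ↥(Sphere2 \ V)) := by
  exact ⟨VV, VV_subset, VV_ncard, ⟨⟨eT, PhiT_cont, eT_symm_cont⟩⟩⟩
end
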